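/- arXiv:1905.13095 — 5 statements merged into one kernel-verified Lean document; each statement's English description precedes it below -/
import Mathlib

section
/- (Theorem 4.1(i), dual-adversary feasibility form.) Let ℓ, n, m ≥ 1, let D ⊆ [ℓ]^n be a finite set, and let 𝒯 be a generalized decision tree with a G-coloring that is read-once along paths and decides a function f : D → [m]. Suppose every root-to-leaf path of 𝒯 has length at most T and contains at most G red edges, where G, T ≥ 1 are real numbers. Then there exist a finite-dimensional complex inner product space H and vectors u_{x,j}, w_{x,j} ∈ H for x ∈ D and 1 ≤ j ≤ n such that: (a) for all x, y ∈ D, Σ_{j : x_j ≠ y_j} ⟨u_{x,j}, w_{y,j}⟩ = 1 − δ_{f(x), f(y)} (the sum over all j with x_j ≠ y_j of the inner products equals 0 if f(x) = f(y) and 1 otherwise); and (b) for every x ∈ D, Σ_{j=1}^n ‖u_{x,j}‖² ≤ 12·√(G·T) and Σ_{j=1}^n ‖w_{x,j}‖² ≤ 12·√(G·T). -/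
open scoped InnerProductSpace

/-- A generalized decision tree over the alphabet `Fin ℓ`, input length `n` and output
set `Fin m`, together with a G-coloring of its edges (`true` = black, `false` = red).
At a `node J Q color child`: `J` is the query index carried by the vertex, `Q q` is the
representative of the class of the partition of `Fin ℓ` containing `q` (so the classes
are the fibers of `Q`), `color q` is the color of the outgoing edge labeled by the class
of `q`, and `child q` is the child reached along that edge. -/
inductive GDT (ℓ n m : ℕ) : Type where
  | leaf (label : Fin m) : GDT ℓ n m
  | node (J : Fin n) (Q : Fin ℓ → Fin ℓ) (color : Fin ℓ → Bool)
      (child : Fin ℓ → GDT ℓ n m) : GDT ℓ n m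

namespace GDT

variable {ℓ n m : ℕ}

/-- Well-formedness of the partitions: at every vertex, `Q` is idempotent (so it is a
class-representative map for the partition of `Fin ℓ` into the fibers of `Q`), and the
child reached depends only on the class. -/
def TreeWF : GDT ℓ n m → Prop
  | .leaf _ => True
  | .node _ Q _ child =>
      (∀ q, Q (Q q) = Q q) ∧ (∀ q, child (Q q) = child q) ∧ ∀ q, TreeWF (child q)

/-- Well-formedness of the G-coloring: the color of an outgoing edge depends only on the
class, and every vertex has at most one black (`true`) outgoing edge. -/
def ColorWF : GDT ℓ n m → Prop
  | .leaf _ => True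
  | .node _ Q color child =>
      (∀ q, color (Q q) = color q) ∧
      (∀ q q', color q = true → color q' = true → Q q = Q q') ∧
      ∀ q, ColorWF (child q)

/-- The label of the leaf reached by the computation path of input `x`. -/
def output : GDT ℓ n m → (Fin n → Fin ℓ) → Fin m
  | .leaf a, _ => a
  | .node J _ _ child, x => output (child (x J)) x

/-- The length (number of edges) of the computation path of input `x`. -/
def pathLen : GDT ℓ n m → (Fin n → Fin ℓ) → ℕ
  | .leaf _, _ => 0
  | .node J _ _ child, x => pathLen (child (x J)) x + 1

/-- The number of red (`false`) edges on the computation path of input `x`. -/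
def redCount : GDT ℓ n m → (Fin n → Fin ℓ) → ℕ
  | .leaf _, _ => 0
  | .node J _ color child, x =>
      redCount (child (x J)) x + if color (x J) = false then 1 else 0

/-- `t.ReadOnceFrom s`: no query index of `s` occurs in `t`, and no query index is used
twice along a root-to-leaf path of `t`. -/
def ReadOnceFrom : GDT ℓ n m → Finset (Fin n) → Prop
  | .leaf _, _ => True
  | .node J _ _ child, s => J ∉ s ∧ ∀ q, ReadOnceFrom (child q) (insert J s)

/-- The tree is read-once along paths: no query index appears at two vertices of the same
root-to-leaf path. -/
def ReadOnce (t : GDT ℓ n m) : Prop := t.ReadOnceFrom ∅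

end GDT

/-!
Every vertex `v` on the computation path of `x` owns a block of coordinates, addressed by the
classes chosen on the way to `v`, and puts a coefficient vector into `u x (J v)` and
`w x (J v)` there. Blocks of distinct vertices are orthogonal, so in
`∑_{j : x j ≠ y j} ⟪u x j, w y j⟫` only the vertices shared by the two paths interact. At such
a vertex the two coefficient vectors pair to `(1 - [r = r']) (1 - [a = a'])`, where `r, r'` are
the classes taken by `x, y` and `a, a'` the outputs; if both edges are black they pair to `0`,
which agrees since then `r = r'`. Hence only the vertex where the paths split contributes, and
it contributes `[f x ≠ f y]`. The colour factor puts weight `β⁻²` on every edge and `β²` only on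
red ones, so both squared norms are at most `4 (β⁻² T + β² G)`, which is `8 √(G T)` for
`β² = √(T / G)`.
-/

section ProdTriple

variable {α β γ : Type*}

def prodTriple (f : α → ℝ) (g : β → ℝ) (h : γ → ℝ) (p : α × β × γ) : ℝ :=
  f p.1 * g p.2.1 * h p.2.2

variable [Fintype α] [Fintype β] [Fintype γ]

theorem sum_prodTriple_mul (f f' : α → ℝ) (g g' : β → ℝ) (h h' : γ → ℝ) :
    ∑ p, prodTriple f g h p * prodTriple f' g' h' p =
      (∑ a, f a * f' a) * (∑ b, g b * g' b) * ∑ c, h c * h' c := by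
  rw [Finset.sum_mul_sum, Finset.sum_mul]
  simp_rw [Fintype.sum_prod_type, Finset.sum_mul, Finset.mul_sum, prodTriple]
  exact Finset.sum_congr rfl fun _ _ => Finset.sum_congr rfl fun _ _ =>
    Finset.sum_congr rfl fun _ _ => by ring

theorem sum_prodTriple_sq (f : α → ℝ) (g : β → ℝ) (h : γ → ℝ) :
    ∑ p, prodTriple f g h p ^ 2 = (∑ a, f a ^ 2) * (∑ b, g b ^ 2) * ∑ c, h c ^ 2 := by
  simpa only [sq] using sum_prodTriple_mul f f g g h h

end ProdTriple

section Gadget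

variable {κ μ : Type*} [DecidableEq κ] [DecidableEq μ]

def optIndicator (r : κ) (s : ℝ) : Option κ → ℝ
  | none => 1
  | some c => if c = r then s else 0

theorem sum_optIndicator_mul [Fintype κ] (r r' : κ) (s s' : ℝ) :
    ∑ o, optIndicator r s o * optIndicator r' s' o = 1 + if r = r' then s * s' else 0 := by
  rw [Fintype.sum_option]
  simp only [optIndicator, one_mul, ite_mul, zero_mul, mul_ite, mul_zero]
  rcases eq_or_ne r r' with rfl | h
  · simp
  · simp [h, h.symm, Finset.sum_ite_eq']

theorem sum_optIndicator_sq [Fintype κ] (r : κ) {s : ℝ} (hs : s ^ 2 = 1) :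
    ∑ o, optIndicator r s o ^ 2 = 2 := by
  simpa only [← sq, hs, if_pos, one_add_one_eq_two] using sum_optIndicator_mul r r s s

noncomputable def uSlot (β : ℝ) : Bool → Bool → ℝ
  | true, true => β⁻¹
  | false, false => β
  | _, _ => 0

noncomputable def wSlot (β : ℝ) : Bool → Bool → ℝ
  | _, false => β⁻¹
  | c, true => if c then 0 else β

theorem sum_uSlot_mul_wSlot {β : ℝ} (hβ : β ≠ 0) (cx cy : Bool) :
    ∑ k, uSlot β cx k * wSlot β cy k = if cx && cy then 0 else 1 := by
  cases cx <;> cases cy <;> simp [uSlot, wSlot, hβ]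

theorem sum_uSlot_sq_le (β : ℝ) (c : Bool) :
    ∑ k, uSlot β c k ^ 2 ≤ β⁻¹ ^ 2 + if c = false then β ^ 2 else 0 := by
  cases c <;> simp [uSlot, sq_nonneg]

theorem sum_wSlot_sq (β : ℝ) (c : Bool) :
    ∑ k, wSlot β c k ^ 2 = β⁻¹ ^ 2 + if c = false then β ^ 2 else 0 := by
  cases c <;> simp [wSlot, add_comm]

noncomputable def uCoef (β : ℝ) (c : Bool) (r : κ) (a : μ) : Bool × Option κ × Option μ → ℝ :=
  prodTriple (uSlot β c) (optIndicator r (-1)) (optIndicator a (-1))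

noncomputable def wCoef (β : ℝ) (c : Bool) (r : κ) (a : μ) : Bool × Option κ × Option μ → ℝ :=
  prodTriple (wSlot β c) (optIndicator r 1) (optIndicator a 1)

variable [Fintype κ] [Fintype μ]

theorem sum_uCoef_mul_wCoef {β : ℝ} (hβ : β ≠ 0) {cx cy : Bool} {rx ry : κ} (ax ay : μ)
    (hblack : cx = true → cy = true → rx = ry) :
    ∑ b, uCoef β cx rx ax b * wCoef β cy ry ay b = if rx = ry ∨ ax = ay then 0 else 1 := by
  rw [uCoef, wCoef, sum_prodTriple_mul, sum_uSlot_mul_wSlot hβ, sum_optIndicator_mul,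
    sum_optIndicator_mul]
  by_cases hr : rx = ry <;> by_cases ha : ax = ay <;> cases cx <;> cases cy <;> simp_all

theorem sum_uCoef_sq_le (β : ℝ) (c : Bool) (r : κ) (a : μ) :
    ∑ b, uCoef β c r a b ^ 2 ≤ 4 * β⁻¹ ^ 2 + if c = false then 4 * β ^ 2 else 0 := by
  rw [uCoef, sum_prodTriple_sq, sum_optIndicator_sq _ neg_one_sq,
    sum_optIndicator_sq _ neg_one_sq]
  have := sum_uSlot_sq_le β c
  split_ifs at this ⊢ <;> linarith

theorem sum_wCoef_sq_le (β : ℝ) (c : Bool) (r : κ) (a : μ) :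
    ∑ b, wCoef β c r a b ^ 2 ≤ 4 * β⁻¹ ^ 2 + if c = false then 4 * β ^ 2 else 0 := by
  rw [wCoef, sum_prodTriple_sq, sum_optIndicator_sq _ (one_pow 2),
    sum_optIndicator_sq _ (one_pow 2), sum_wSlot_sq]
  split_ifs <;> linarith

end Gadget

namespace GDT

variable {ℓ n m : ℕ}

abbrev Block (ℓ m : ℕ) := Bool × Option (Fin ℓ) × Option (Fin m)

def Index : GDT ℓ n m → Type
  | .leaf _ => Empty
  | .node _ _ _ child => Block ℓ m ⊕ Σ q, Index (child q)

instance instFintypeIndex : ∀ t : GDT ℓ n m, Fintype t.Index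
  | .leaf _ => inferInstanceAs (Fintype Empty)
  | .node _ _ _ child =>
    have := fun q => instFintypeIndex (child q)
    inferInstanceAs (Fintype (Block ℓ m ⊕ Σ q, (child q).Index))

instance (a : Fin m) : IsEmpty (leaf a : GDT ℓ n m).Index := inferInstanceAs (IsEmpty Empty)

/-- Subtree coordinates are addressed by the class representative `Q (x J)`, so inputs taking
the same class at a vertex share the coordinates below it. -/
def pathVec (coef : Bool → Fin ℓ → Fin m → Block ℓ m → ℝ) :
    (t : GDT ℓ n m) → (Fin n → Fin ℓ) → Fin n → t.Index → ℝ
  | .leaf _, _, _, i => nomatch i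
  | .node J Q color child, x, j, .inl b =>
      if j = J then coef (color (x J)) (Q (x J)) ((child (x J)).output x) b else 0
  | .node J Q _ child, x, j, .inr ⟨q, i⟩ =>
      if q = Q (x J) then pathVec coef (child q) x j i else 0

theorem sum_index_node {J : Fin n} {Q : Fin ℓ → Fin ℓ} {color : Fin ℓ → Bool}
    {child : Fin ℓ → GDT ℓ n m} (F : (node J Q color child).Index → ℝ) :
    ∑ i, F i = ∑ b, F (.inl b) + ∑ q, ∑ i, F (.inr ⟨q, i⟩) :=
  (Fintype.sum_sum_type F).trans (congrArg _ (Fintype.sum_sigma _))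

theorem sum_pathVec_mul_pathVec_node (cu cw : Bool → Fin ℓ → Fin m → Block ℓ m → ℝ)
    (J : Fin n) (Q : Fin ℓ → Fin ℓ) (color : Fin ℓ → Bool) (child : Fin ℓ → GDT ℓ n m)
    (x y : Fin n → Fin ℓ) (j : Fin n) :
    ∑ i, pathVec cu (node J Q color child) x j i * pathVec cw (node J Q color child) y j i =
      (if j = J then ∑ b, cu (color (x J)) (Q (x J)) ((child (x J)).output x) b *
          cw (color (y J)) (Q (y J)) ((child (y J)).output y) b else 0) +
      if Q (x J) = Q (y J) then
        ∑ i, pathVec cu (child (Q (x J))) x j i * pathVec cw (child (Q (x J))) y j i else 0 := by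
  rw [sum_index_node]
  congr 1
  · split_ifs <;> simp [pathVec, *]
  · rcases eq_or_ne (Q (x J)) (Q (y J)) with h | h
    · simp [pathVec, ← h, Finset.sum_ite_irrel]
    · simp [pathVec, h, h.symm, Finset.sum_ite_irrel]

theorem sum_filter_sum_pathVec_mul_pathVec {β : ℝ} (hβ : β ≠ 0) (x y : Fin n → Fin ℓ) :
    ∀ t : GDT ℓ n m, t.TreeWF → t.ColorWF →
      ∑ j ∈ Finset.univ.filter (fun j => x j ≠ y j),
          ∑ i, pathVec (uCoef β) t x j i * pathVec (wCoef β) t y j i =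
        if t.output x = t.output y then 0 else 1 := by
  intro t
  induction t with
  | leaf a => simp [output]
  | node J Q color child ih =>
    rintro ⟨-, hchild, htree⟩ ⟨-, hblack, hcol⟩
    simp_rw [sum_pathVec_mul_pathVec_node, Finset.sum_add_distrib,
      sum_uCoef_mul_wCoef hβ _ _ (hblack (x J) (y J))]
    show _ = if (child (x J)).output x = (child (y J)).output y then 0 else 1
    rcases eq_or_ne (Q (x J)) (Q (y J)) with h | h
    · have hy : child (y J) = child (Q (x J)) := by rw [h, hchild]
      simp only [h, true_or, if_true, ite_self, Finset.sum_const_zero, zero_add]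
      rw [ih _ (htree _) (hcol _), hy, hchild]
    · have hJ : J ∈ Finset.univ.filter (fun j => x j ≠ y j) := by
        simp only [Finset.mem_filter, Finset.mem_univ, true_and]
        exact fun hxy => h (by rw [hxy])
      simp [h, Finset.sum_ite_eq', hJ]

theorem sum_sum_pathVec_sq_le {coef : Bool → Fin ℓ → Fin m → Block ℓ m → ℝ} {A B : ℝ}
    (hcoef : ∀ c r a, ∑ b, coef c r a b ^ 2 ≤ A + if c = false then B else 0)
    (x : Fin n → Fin ℓ) :
    ∀ t : GDT ℓ n m, t.TreeWF →
      ∑ j, ∑ i, pathVec coef t x j i ^ 2 ≤ A * t.pathLen x + B * t.redCount x := by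
  intro t
  induction t with
  | leaf a => intro; simp [pathLen, redCount]
  | node J Q color child ih =>
    rintro ⟨-, hchild, htree⟩
    have hnode : ∀ j, ∑ i, pathVec coef (node J Q color child) x j i ^ 2 =
        (if j = J then ∑ b, coef (color (x J)) (Q (x J)) ((child (x J)).output x) b ^ 2
          else 0) + ∑ i, pathVec coef (child (Q (x J))) x j i ^ 2 := fun j => by
      simpa only [← sq, if_true] using
        sum_pathVec_mul_pathVec_node coef coef J Q color child x x j
    simp only [hnode, Finset.sum_add_distrib, Finset.sum_ite_eq', Finset.mem_univ, if_true,
      pathLen, redCount]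
    rw [hchild]
    have := hcoef (color (x J)) (Q (x J)) ((child (x J)).output x)
    have := ih (x J) (htree _)
    push_cast
    split_ifs at * <;> linarith

end GDT

section EuclideanOfReal

variable {ι : Type*} [Fintype ι]

noncomputable def euclideanOfReal (v : ι → ℝ) : EuclideanSpace ℂ (Fin (Fintype.card ι)) :=
  WithLp.toLp 2 fun k => (v ((Fintype.equivFin ι).symm k) : ℂ)

theorem inner_euclideanOfReal (v w : ι → ℝ) :
    ⟪euclideanOfReal v, euclideanOfReal w⟫_ℂ = ((∑ i, v i * w i : ℝ) : ℂ) := by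
  rw [PiLp.inner_apply, Complex.ofReal_sum,
    ← (Fintype.equivFin ι).symm.sum_comp (fun i => ((v i * w i : ℝ) : ℂ))]
  simp [euclideanOfReal, mul_comm]

theorem norm_euclideanOfReal_sq (v : ι → ℝ) : ‖euclideanOfReal v‖ ^ 2 = ∑ i, v i ^ 2 := by
  rw [EuclideanSpace.norm_sq_eq, ← (Fintype.equivFin ι).symm.sum_comp (fun i => v i ^ 2)]
  simp [euclideanOfReal]

end EuclideanOfReal

theorem inv_sq_mul_add_sq_mul_of_sqrt_div {T G : ℝ} (hT : 0 < T) (hG : 0 < G) :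
    (√(√T / √G))⁻¹ ^ 2 * T + √(√T / √G) ^ 2 * G = 2 * √(G * T) := by
  have hsqT : 0 < √T := Real.sqrt_pos.2 hT
  have hsqG : 0 < √G := Real.sqrt_pos.2 hG
  rw [inv_pow, Real.sq_sqrt (by positivity), Real.sqrt_mul hG.le]
  field_simp
  rw [Real.sq_sqrt hT.le, Real.sq_sqrt hG.le]
  ring

theorem stmt0_general {ℓ n m : ℕ}
    (D : Finset (Fin n → Fin ℓ)) (f : (Fin n → Fin ℓ) → Fin m)
    (t : GDT ℓ n m) (htree : t.TreeWF) (hcol : t.ColorWF)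
    (hdec : ∀ x ∈ D, t.output x = f x)
    (T G : ℝ) (hT1 : 1 ≤ T) (hG1 : 1 ≤ G)
    (hT : ∀ x : Fin n → Fin ℓ, (t.pathLen x : ℝ) ≤ T)
    (hG : ∀ x : Fin n → Fin ℓ, (t.redCount x : ℝ) ≤ G) :
    ∃ (d : ℕ) (u w : (Fin n → Fin ℓ) → Fin n → EuclideanSpace ℂ (Fin d)),
      (∀ x ∈ D, ∀ y ∈ D,
          ∑ j ∈ Finset.univ.filter (fun j => x j ≠ y j), ⟪u x j, w y j⟫_ℂ
            = if f x = f y then 0 else 1) ∧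
      (∀ x ∈ D, ∑ j, ‖u x j‖ ^ 2 ≤ 12 * Real.sqrt (G * T)) ∧
      (∀ x ∈ D, ∑ j, ‖w x j‖ ^ 2 ≤ 12 * Real.sqrt (G * T)) := by
  set β := √(√T / √G)
  have hβ : β ≠ 0 := Real.sqrt_ne_zero'.2 (by positivity)
  have hcost : ∀ x, 4 * β⁻¹ ^ 2 * t.pathLen x + 4 * β ^ 2 * t.redCount x ≤ 12 * √(G * T) :=
    fun x => calc
      _ ≤ 4 * β⁻¹ ^ 2 * T + 4 * β ^ 2 * G := by gcongr <;> [exact hT x; exact hG x]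
      _ = 8 * √(G * T) := by
        linear_combination 4 * inv_sq_mul_add_sq_mul_of_sqrt_div (T := T) (G := G)
          (by linarith) (by linarith)
      _ ≤ 12 * √(G * T) := by linarith [Real.sqrt_nonneg (G * T)]
  refine ⟨_, fun x j => euclideanOfReal (GDT.pathVec (uCoef β) t x j),
    fun x j => euclideanOfReal (GDT.pathVec (wCoef β) t x j), fun x hx y hy => ?_,
    fun x _ => ?_, fun x _ => ?_⟩
  · simp_rw [inner_euclideanOfReal]
    rw [← Complex.ofReal_sum, GDT.sum_filter_sum_pathVec_mul_pathVec hβ x y t htree hcol,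
      hdec x hx, hdec y hy]
    split_ifs <;> simp
  · simp_rw [norm_euclideanOfReal_sq]
    exact (GDT.sum_sum_pathVec_sq_le (sum_uCoef_sq_le β) x t htree).trans (hcost x)
  · simp_rw [norm_euclideanOfReal_sq]
    exact (GDT.sum_sum_pathVec_sq_le (sum_wCoef_sq_le β) x t htree).trans (hcost x)

/-- **Theorem 4.1(i), dual-adversary feasibility form.**  Given a generalized decision
tree with a G-coloring, read-once along paths, deciding `f : D → Fin m`, whose
root-to-leaf paths have length at most `T` and contain at most `G` red edges, there is a
feasible solution of the dual adversary SDP for `f` with objective value at most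
`12 * √(G * T)`. -/
theorem stmt0 {ℓ n m : ℕ} (hl : 1 ≤ ℓ) (hn : 1 ≤ n) (hm : 1 ≤ m)
    (D : Finset (Fin n → Fin ℓ)) (f : (Fin n → Fin ℓ) → Fin m)
    (t : GDT ℓ n m) (htree : t.TreeWF) (hcol : t.ColorWF) (hro : t.ReadOnce)
    (hdec : ∀ x ∈ D, t.output x = f x)
    (T G : ℝ) (hT1 : 1 ≤ T) (hG1 : 1 ≤ G)
    (hT : ∀ x : Fin n → Fin ℓ, (t.pathLen x : ℝ) ≤ T)
    (hG : ∀ x : Fin n → Fin ℓ, (t.redCount x : ℝ) ≤ G) :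
    ∃ (d : ℕ) (u w : (Fin n → Fin ℓ) → Fin n → EuclideanSpace ℂ (Fin d)),
      (∀ x ∈ D, ∀ y ∈ D,
          ∑ j ∈ Finset.univ.filter (fun j => x j ≠ y j), ⟪u x j, w y j⟫_ℂ
            = if f x = f y then 0 else 1) ∧
      (∀ x ∈ D, ∑ j, ‖u x j‖ ^ 2 ≤ 12 * Real.sqrt (G * T)) ∧
      (∀ x ∈ D, ∑ j, ‖w x j‖ ^ 2 ≤ 12 * Real.sqrt (G * T)) :=
  stmt0_general D f t htree hcol hdec T G hT1 hG1 hT hG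
end

section
/- (Theorem 4.1(ii), dual-adversary feasibility form for randomized decision trees.) Let ℓ, n, m, K ≥ 1, let D ⊆ [ℓ]^n be a finite set, and for each ζ ∈ {1, …, K} let 𝒯_ζ be a generalized decision tree with a G-coloring that is read-once along paths and decides a function f_ζ : D → [m]. For x ∈ D let T_x^ζ be the length of the computation path of x in 𝒯_ζ and G_x^ζ the number of red edges on it, and set T = max_{x ∈ D} (1/K)·Σ_{ζ=1}^K T_x^ζ and G = max_{x ∈ D} (1/K)·Σ_{ζ=1}^K G_x^ζ; assume T > 0 and G > 0. Then there exist a finite-dimensional complex inner product space H and vectors u_{x,j}, w_{x,j} ∈ H for x ∈ D and 1 ≤ j ≤ n such that: (a) for all x, y ∈ D, Σ_{j : x_j ≠ y_j} ⟨u_{x,j}, w_{y,j}⟩ = 1 − (1/K)·|{ζ : f_ζ(x) = f_ζ(y)}|; and (b) for every x ∈ D, Σ_{j=1}^n ‖u_{x,j}‖² ≤ 12·√(G·T) and Σ_{j=1}^n ‖w_{x,j}‖² ≤ 12·√(G·T). -/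
open scoped InnerProductSpace

/-!
Fix a tree and a query index `j`. The vertex of the computation path of `x` that queries `j`
(if any) carries a short vector depending on the class `r` and the color `b` of the edge along
which `x` leaves it. The `u`- and `w`-versions are chosen so that their inner product is `0`
for equal classes and `1` for different classes unless both edges are black, which the
G-coloring rules out at a single vertex. With a separate block of coordinates for every vertex,
the sum over the `j` with `x j ≠ y j` only sees the vertex where the paths of `x` and `y`
separate: it is `1` if `x` and `y` reach different leaves and `0` otherwise. Tensoring with
`e₀ ± e_{a+1}`, `a` the output, turns this into `1` exactly when the outputs differ, and
averaging over the `K` trees gives the Gram identity. A red edge costs `s ^ 2 + 2` and a black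
one `s⁻²`, so the squared norms are at most `2 ((s ^ 2 + 2) G + s⁻² T)`, which is at most
`8 √(G T)` for `s ^ 2 = √(T / G)`.
-/

namespace GDT

variable {ℓ n m : ℕ}

def SameLeaf : GDT ℓ n m → (Fin n → Fin ℓ) → (Fin n → Fin ℓ) → Prop
  | .leaf _, _, _ => True
  | .node J Q _ child, x, y => Q (x J) = Q (y J) ∧ SameLeaf (child (x J)) x y

theorem SameLeaf.output_eq {t : GDT ℓ n m} (ht : t.TreeWF) {x y : Fin n → Fin ℓ}
    (h : t.SameLeaf x y) : t.output x = t.output y := by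
  induction t with
  | leaf => rfl
  | node J Q color child ih =>
    have hchild : child (y J) = child (x J) := by rw [← ht.2.1 (y J), ← h.1, ht.2.1]
    simpa only [output, hchild] using ih (x J) (ht.2.2 (x J)) h.2

theorem redCount_le_pathLen (t : GDT ℓ n m) (x : Fin n → Fin ℓ) :
    t.redCount x ≤ t.pathLen x := by
  induction t with
  | leaf => exact le_rfl
  | node J Q color child ih =>
    have := ih (x J)
    simp only [redCount, pathLen]
    split_ifs <;> omega

/-- Addresses of the internal vertices: the vertex reached along the edges of classes
`r₁, …, rₖ` has address `[r₁, …, rₖ]` (non-representatives give spurious, unused addresses). -/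
def addrs : GDT ℓ n m → Finset (List (Fin ℓ))
  | .leaf _ => ∅
  | .node _ _ _ child => insert [] (Finset.univ.biUnion fun r => (child r).addrs.image (r :: ·))

theorem sum_addrs_node {M : Type*} [AddCommMonoid M] (J : Fin n) (Q : Fin ℓ → Fin ℓ)
    (color : Fin ℓ → Bool) (child : Fin ℓ → GDT ℓ n m) (F : List (Fin ℓ) → M) :
    ∑ l ∈ (node J Q color child).addrs, F l
      = F [] + ∑ r, ∑ l ∈ (child r).addrs, F (r :: l) := by
  rw [addrs, Finset.sum_insert (by simp), Finset.sum_biUnion]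
  · simp only [Finset.sum_image fun _ _ _ _ h => List.cons_injective h]
  · intro r _ r' _ hne
    simp only [Function.onFun, Finset.disjoint_left, Finset.mem_image]
    rintro _ ⟨a, _, rfl⟩ ⟨b, _, hb⟩
    exact hne (List.cons_eq_cons.1 hb).1.symm

/-- The sum of `g` over the vertices shared by the computation paths of `x` and `y` whose
query index lies in `S`, evaluated at the classes and colors of the edges taken by `x` and `y`. -/
def sharedPathSum (g : Fin ℓ → Bool → Fin ℓ → Bool → ℝ) (S : Finset (Fin n))
    (x y : Fin n → Fin ℓ) : GDT ℓ n m → ℝ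
  | .leaf _ => 0
  | .node J Q color child =>
      (if J ∈ S then g (Q (x J)) (color (x J)) (Q (y J)) (color (y J)) else 0) +
        if Q (x J) = Q (y J) then sharedPathSum g S x y (child (x J)) else 0

open Classical in
theorem sharedPathSum_eq_ite {g : Fin ℓ → Bool → Fin ℓ → Bool → ℝ}
    (hsame : ∀ r b, g r b r b = 0)
    (hdiff : ∀ r r' b b', r ≠ r' → ¬(b = true ∧ b' = true) → g r b r' b' = 1)
    {t : GDT ℓ n m} (hc : t.ColorWF) {S : Finset (Fin n)} {x y : Fin n → Fin ℓ}
    (hS : ∀ j, x j ≠ y j → j ∈ S) :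
    t.sharedPathSum g S x y = if t.SameLeaf x y then 0 else 1 := by
  induction t with
  | leaf => simp [sharedPathSum, SameLeaf]
  | node J Q color child ih =>
    by_cases hQ : Q (x J) = Q (y J)
    · have hcolor : color (x J) = color (y J) := by rw [← hc.1 (x J), hQ, hc.1]
      simp [sharedPathSum, SameLeaf, hQ, hcolor, hsame, ih (x J) (hc.2.2 (x J))]
    · have hJ : J ∈ S := hS J fun h => hQ (congrArg Q h)
      have hblack : ¬(color (x J) = true ∧ color (y J) = true) := fun h =>
        hQ (hc.2.1 _ _ h.1 h.2)
      simp [sharedPathSum, SameLeaf, hQ, hJ, hdiff _ _ _ _ hQ hblack]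

theorem sharedPathSum_self_le {g : Fin ℓ → Bool → Fin ℓ → Bool → ℝ} {α β : ℝ}
    (hred : ∀ r, g r false r false ≤ α) (hblack : ∀ r, g r true r true ≤ β) (hβ : 0 ≤ β)
    (t : GDT ℓ n m) (x : Fin n → Fin ℓ) :
    t.sharedPathSum g Finset.univ x x ≤ α * t.redCount x + β * t.pathLen x := by
  induction t with
  | leaf => simp [sharedPathSum, redCount, pathLen]
  | node J Q color child ih =>
    simp only [sharedPathSum, redCount, pathLen, Finset.mem_univ, if_true]
    cases color (x J) <;>
      simp only [Bool.true_eq_false, ↓reduceIte, add_zero, Nat.cast_add, Nat.cast_one] <;>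
      linarith [ih (x J), hred (Q (x J)), hblack (Q (x J))]

section embed

variable {ι : Type*}

/-- The vertex-indexed family of vectors attached to input `x` and query index `j`: the
vertex of the computation path of `x` that queries `j` carries `φ r b`, where `r` and `b`
are the class and the color of the edge along which `x` leaves it. -/
def embed (φ : Fin ℓ → Bool → ι → ℝ) (x : Fin n → Fin ℓ) (j : Fin n) :
    GDT ℓ n m → List (Fin ℓ) → ι → ℝ
  | .leaf _, _ => 0
  | .node J Q color _, [] => if J = j then φ (Q (x J)) (color (x J)) else 0
  | .node J Q _ child, r :: l => if r = Q (x J) then embed φ x j (child r) l else 0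

theorem embed_eq_zero_of_notMem (φ : Fin ℓ → Bool → ι → ℝ) (x : Fin n → Fin ℓ) (j : Fin n)
    {t : GDT ℓ n m} {l : List (Fin ℓ)} (hl : l ∉ t.addrs) : t.embed φ x j l = 0 := by
  induction t generalizing l with
  | leaf => rfl
  | node J Q color child ih =>
    match l, hl with
    | [], hl => exact absurd (Finset.mem_insert_self _ _) hl
    | r :: l, hl =>
      have : l ∉ (child r).addrs := fun h => hl <| Finset.mem_insert_of_mem <|
        Finset.mem_biUnion.2 ⟨r, Finset.mem_univ _, Finset.mem_image_of_mem _ h⟩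
      simp only [embed, ih r this, ite_self]

theorem sum_embed_dotProduct_embed [Fintype ι] {t : GDT ℓ n m} (ht : t.TreeWF)
    (φ ψ : Fin ℓ → Bool → ι → ℝ) (S : Finset (Fin n)) (x y : Fin n → Fin ℓ) :
    ∑ j ∈ S, ∑ l ∈ t.addrs, t.embed φ x j l ⬝ᵥ t.embed ψ y j l
      = t.sharedPathSum (fun r b r' b' => φ r b ⬝ᵥ ψ r' b') S x y := by
  induction t with
  | leaf => simp [addrs, sharedPathSum]
  | node J Q color child ih =>
    have hroot : ∀ j, (node J Q color child).embed φ x j [] ⬝ᵥ (node J Q color child).embed ψ y j []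
        = if J = j then φ (Q (x J)) (color (x J)) ⬝ᵥ ψ (Q (y J)) (color (y J)) else 0 := by
      intro j
      simp only [embed]
      split_ifs <;> simp
    have hbranch : ∀ j r, ∑ l ∈ (child r).addrs,
        (node J Q color child).embed φ x j (r :: l) ⬝ᵥ (node J Q color child).embed ψ y j (r :: l)
          = if r = Q (x J) ∧ Q (x J) = Q (y J) then
              ∑ l ∈ (child (x J)).addrs, (child (x J)).embed φ x j l ⬝ᵥ (child (x J)).embed ψ y j l
            else 0 := by
      intro j r
      by_cases hx : r = Q (x J)
      · subst hx
        by_cases hxy : Q (x J) = Q (y J)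
        · simp [embed, ← hxy, ht.2.1 (x J)]
        · simp [embed, hxy]
      · simp [embed, hx]
    simp only [sum_addrs_node, Finset.sum_add_distrib, hroot, hbranch, ite_and,
      Finset.sum_ite_eq', Finset.mem_univ, if_true, Finset.sum_ite_eq, Finset.sum_ite_irrel,
      Finset.sum_const_zero, sharedPathSum]
    rw [ih (x J) (ht.2.2 (x J))]

end embed

end GDT

section Gadgets

variable {N : ℕ}

def plusVec (r : Fin N) : Fin (N + 1) → ℝ := Pi.single 0 1 + Pi.single r.succ 1

def minusVec (r : Fin N) : Fin (N + 1) → ℝ := Pi.single 0 1 - Pi.single r.succ 1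

theorem plusVec_dotProduct_minusVec (r r' : Fin N) :
    plusVec r ⬝ᵥ minusVec r' = if r = r' then 0 else 1 := by
  split_ifs with h <;>
    simp [plusVec, minusVec, dotProduct_sub, (Fin.succ_ne_zero _).symm, h]

theorem plusVec_dotProduct_self (r : Fin N) : plusVec r ⬝ᵥ plusVec r = 2 := by
  norm_num [plusVec, dotProduct_add, (Fin.succ_ne_zero _).symm]

theorem minusVec_dotProduct_self (r : Fin N) : minusVec r ⬝ᵥ minusVec r = 2 := by
  norm_num [minusVec, dotProduct_sub, (Fin.succ_ne_zero _).symm]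

noncomputable def edgeVecU (s : ℝ) (r : Fin N) : Bool → Bool ⊕ Fin (N + 1) → ℝ
  | false => Sum.elim (Pi.single true s) (plusVec r)
  | true => Sum.elim (Pi.single false s⁻¹) 0

noncomputable def edgeVecW (s : ℝ) (r : Fin N) : Bool → Bool ⊕ Fin (N + 1) → ℝ
  | false => Sum.elim (Pi.single false s) (minusVec r)
  | true => Sum.elim (Pi.single true s⁻¹) 0

theorem edgeVecU_dotProduct_edgeVecW_self (s : ℝ) (r : Fin N) (b : Bool) :
    edgeVecU s r b ⬝ᵥ edgeVecW s r b = 0 := by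
  cases b <;> simp [edgeVecU, edgeVecW, plusVec_dotProduct_minusVec]

theorem edgeVecU_dotProduct_edgeVecW_of_ne {s : ℝ} (hs : s ≠ 0) {r r' : Fin N} {b b' : Bool}
    (hr : r ≠ r') (hb : ¬(b = true ∧ b' = true)) :
    edgeVecU s r b ⬝ᵥ edgeVecW s r' b' = 1 := by
  cases b <;> cases b' <;>
    simp_all [edgeVecU, edgeVecW, plusVec_dotProduct_minusVec]

theorem edgeVecU_dotProduct_self (s : ℝ) (r : Fin N) (b : Bool) :
    edgeVecU s r b ⬝ᵥ edgeVecU s r b = if b then s⁻¹ ^ 2 else s ^ 2 + 2 := by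
  cases b <;> simp [edgeVecU, plusVec_dotProduct_self, sq]

theorem edgeVecW_dotProduct_self (s : ℝ) (r : Fin N) (b : Bool) :
    edgeVecW s r b ⬝ᵥ edgeVecW s r b = if b then s⁻¹ ^ 2 else s ^ 2 + 2 := by
  cases b <;> simp [edgeVecW, minusVec_dotProduct_self, sq]

end Gadgets

section Euclid

variable {ι : Type*} [Fintype ι]

noncomputable def toEuclid (v : ι → ℝ) : EuclideanSpace ℂ (Fin (Fintype.card ι)) :=
  WithLp.toLp 2 fun i => (v ((Fintype.equivFin ι).symm i) : ℂ)

theorem inner_toEuclid (v w : ι → ℝ) : ⟪toEuclid v, toEuclid w⟫_ℂ = (v ⬝ᵥ w : ℝ) := by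
  simp only [toEuclid, PiLp.inner_apply, RCLike.inner_apply, Complex.conj_ofReal, dotProduct,
    Complex.ofReal_sum, Complex.ofReal_mul, mul_comm]
  exact Equiv.sum_comp (Fintype.equivFin ι).symm fun i => (v i : ℂ) * w i

theorem norm_toEuclid_sq (v : ι → ℝ) : ‖toEuclid v‖ ^ 2 = v ⬝ᵥ v := by
  rw [← Complex.ofReal_inj, ← inner_toEuclid, inner_self_eq_norm_sq_to_K]
  norm_cast

end Euclid

section DualVec

open GDT

variable {ℓ n m K : ℕ} {ι κ : Type*} [Fintype ι] [Fintype κ]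

noncomputable def dualVec (t : Fin K → GDT ℓ n m) (A : Finset (List (Fin ℓ)))
    (φ : Fin ℓ → Bool → ι → ℝ) (o : Fin m → κ → ℝ) (x : Fin n → Fin ℓ) (j : Fin n) :
    Fin K × (A × ι) × κ → ℝ :=
  fun p => (√K)⁻¹ * ((t p.1).embed φ x j p.2.1.1 p.2.1.2 * o ((t p.1).output x) p.2.2)

theorem dualVec_dotProduct (t : Fin K → GDT ℓ n m) (A : Finset (List (Fin ℓ)))
    (φ ψ : Fin ℓ → Bool → ι → ℝ) (o o' : Fin m → κ → ℝ) (x y : Fin n → Fin ℓ) (j : Fin n) :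
    dualVec t A φ o x j ⬝ᵥ dualVec t A ψ o' y j
      = (K : ℝ)⁻¹ * ∑ ζ, (∑ l ∈ A, (t ζ).embed φ x j l ⬝ᵥ (t ζ).embed ψ y j l) *
          (o ((t ζ).output x) ⬝ᵥ o' ((t ζ).output y)) := by
  have hK : (√K)⁻¹ * (√K)⁻¹ = (K : ℝ)⁻¹ := by
    rw [← mul_inv, Real.mul_self_sqrt K.cast_nonneg]
  simp only [dotProduct, dualVec, Fintype.sum_prod_type]
  simp_rw [Finset.sum_mul, Finset.mul_sum, ← hK]
  refine Finset.sum_congr rfl fun ζ _ => ?_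
  rw [← Finset.sum_coe_sort A]
  exact Fintype.sum_congr _ _ fun l => Fintype.sum_congr _ _ fun c =>
    Fintype.sum_congr _ _ fun k => by ring

variable {t : Fin K → GDT ℓ n m} {A : Finset (List (Fin ℓ))}

theorem sum_dualVec_dotProduct (ht : ∀ ζ, (t ζ).TreeWF) (hA : ∀ ζ, (t ζ).addrs ⊆ A)
    (φ ψ : Fin ℓ → Bool → ι → ℝ) (o o' : Fin m → κ → ℝ) (S : Finset (Fin n))
    (x y : Fin n → Fin ℓ) :
    ∑ j ∈ S, dualVec t A φ o x j ⬝ᵥ dualVec t A ψ o' y j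
      = (K : ℝ)⁻¹ * ∑ ζ, (t ζ).sharedPathSum (fun r b r' b' => φ r b ⬝ᵥ ψ r' b') S x y *
          (o ((t ζ).output x) ⬝ᵥ o' ((t ζ).output y)) := by
  have hrestrict : ∀ ζ j, ∑ l ∈ A, (t ζ).embed φ x j l ⬝ᵥ (t ζ).embed ψ y j l
      = ∑ l ∈ (t ζ).addrs, (t ζ).embed φ x j l ⬝ᵥ (t ζ).embed ψ y j l := fun ζ j =>
    (Finset.sum_subset (hA ζ) fun l _ hl => by
      rw [embed_eq_zero_of_notMem φ x j hl, zero_dotProduct]).symm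
  simp only [dualVec_dotProduct, hrestrict, ← Finset.mul_sum]
  rw [Finset.sum_comm]
  simp only [← Finset.sum_mul, sum_embed_dotProduct_embed (ht _)]

theorem sum_dualVec_dotProduct_eq (hK : K ≠ 0) (ht : ∀ ζ, (t ζ).TreeWF)
    (hc : ∀ ζ, (t ζ).ColorWF) (hA : ∀ ζ, (t ζ).addrs ⊆ A) {φ ψ : Fin ℓ → Bool → ι → ℝ}
    (hsame : ∀ r b, φ r b ⬝ᵥ ψ r b = 0)
    (hdiff : ∀ r r' b b', r ≠ r' → ¬(b = true ∧ b' = true) → φ r b ⬝ᵥ ψ r' b' = 1)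
    {o o' : Fin m → κ → ℝ} (ho : ∀ a a', o a ⬝ᵥ o' a' = if a = a' then 0 else 1)
    (x y : Fin n → Fin ℓ) :
    ∑ j ∈ Finset.univ.filter (fun j => x j ≠ y j), dualVec t A φ o x j ⬝ᵥ dualVec t A ψ o' y j
      = 1 - (Finset.univ.filter fun ζ => (t ζ).output x = (t ζ).output y).card / K := by
  classical
  have hterm : ∀ ζ, (t ζ).sharedPathSum (fun r b r' b' => φ r b ⬝ᵥ ψ r' b')
      (Finset.univ.filter fun j => x j ≠ y j) x y * (o ((t ζ).output x) ⬝ᵥ o' ((t ζ).output y))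
        = 1 - if (t ζ).output x = (t ζ).output y then 1 else 0 := by
    intro ζ
    rw [sharedPathSum_eq_ite hsame hdiff (hc ζ) (by simp), ho]
    by_cases hout : (t ζ).output x = (t ζ).output y
    · simp [hout]
    · simp [hout, mt (SameLeaf.output_eq (ht ζ)) hout]
  rw [sum_dualVec_dotProduct ht hA, Finset.sum_congr rfl fun ζ _ => hterm ζ,
    Finset.sum_sub_distrib, Finset.sum_boole]
  field_simp
  simp

theorem sum_dualVec_dotProduct_self_le (ht : ∀ ζ, (t ζ).TreeWF) (hA : ∀ ζ, (t ζ).addrs ⊆ A)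
    {φ : Fin ℓ → Bool → ι → ℝ} {α β : ℝ} (hred : ∀ r, φ r false ⬝ᵥ φ r false ≤ α)
    (hblack : ∀ r, φ r true ⬝ᵥ φ r true ≤ β) (hβ : 0 ≤ β)
    {o : Fin m → κ → ℝ} {γ : ℝ} (ho : ∀ a, o a ⬝ᵥ o a = γ) (x : Fin n → Fin ℓ) :
    ∑ j, dualVec t A φ o x j ⬝ᵥ dualVec t A φ o x j
      ≤ γ * (α * ((∑ ζ, ((t ζ).redCount x : ℝ)) / K) + β * ((∑ ζ, ((t ζ).pathLen x : ℝ)) / K)) := by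
  have hterm : ∀ ζ, (t ζ).sharedPathSum (fun r b r' b' => φ r b ⬝ᵥ φ r' b') Finset.univ x x *
      (o ((t ζ).output x) ⬝ᵥ o ((t ζ).output x))
        ≤ (α * (t ζ).redCount x + β * (t ζ).pathLen x) * γ := by
    intro ζ
    rw [← ho ((t ζ).output x)]
    exact mul_le_mul_of_nonneg_right (sharedPathSum_self_le hred hblack hβ _ x)
      (Finset.sum_nonneg fun i _ => mul_self_nonneg _)
  calc _ ≤ (K : ℝ)⁻¹ * ∑ ζ, (α * (t ζ).redCount x + β * (t ζ).pathLen x) * γ := by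
        rw [sum_dualVec_dotProduct ht hA]
        exact mul_le_mul_of_nonneg_left (Finset.sum_le_sum fun ζ _ => hterm ζ) (by positivity)
    _ = _ := by
        simp only [← Finset.sum_mul, Finset.sum_add_distrib, ← Finset.mul_sum]
        ring

theorem sum_dualVec_dotProduct_self_le_of_avg_le (ht : ∀ ζ, (t ζ).TreeWF)
    (hA : ∀ ζ, (t ζ).addrs ⊆ A) {s G T : ℝ} {φ : Fin ℓ → Bool → ι → ℝ}
    (hφ : ∀ r b, φ r b ⬝ᵥ φ r b = if b then s⁻¹ ^ 2 else s ^ 2 + 2)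
    {o : Fin m → κ → ℝ} (ho : ∀ a, o a ⬝ᵥ o a = 2) {x : Fin n → Fin ℓ}
    (hred : (∑ ζ, ((t ζ).redCount x : ℝ)) / K ≤ G) (hlen : (∑ ζ, ((t ζ).pathLen x : ℝ)) / K ≤ T) :
    ∑ j, dualVec t A φ o x j ⬝ᵥ dualVec t A φ o x j ≤ 2 * ((s ^ 2 + 2) * G + s⁻¹ ^ 2 * T) :=
  calc _ ≤ 2 * ((s ^ 2 + 2) * ((∑ ζ, ((t ζ).redCount x : ℝ)) / K) +
        s⁻¹ ^ 2 * ((∑ ζ, ((t ζ).pathLen x : ℝ)) / K)) :=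
        sum_dualVec_dotProduct_self_le ht hA (by simp [hφ]) (by simp [hφ]) (by positivity) ho x
    _ ≤ _ := by gcongr

end DualVec

theorem exists_scale_le {G T : ℝ} (hG : 0 < G) (hGT : G ≤ T) :
    ∃ s : ℝ, s ≠ 0 ∧ 2 * ((s ^ 2 + 2) * G + s⁻¹ ^ 2 * T) ≤ 12 * √(G * T) := by
  obtain ⟨a, ha, rfl⟩ : ∃ a, 0 < a ∧ a ^ 2 = G := ⟨√G, Real.sqrt_pos.2 hG, Real.sq_sqrt hG.le⟩
  obtain ⟨b, hb, rfl⟩ : ∃ b, 0 < b ∧ b ^ 2 = T :=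
    ⟨√T, Real.sqrt_pos.2 (hG.trans_le hGT), Real.sq_sqrt (hG.trans_le hGT).le⟩
  have hab : a ≤ b := (pow_le_pow_iff_left₀ ha.le hb.le two_ne_zero).1 hGT
  refine ⟨√(b / a), (Real.sqrt_pos.2 (div_pos hb ha)).ne', ?_⟩
  rw [inv_pow, Real.sq_sqrt (by positivity), ← mul_pow, Real.sqrt_sq (by positivity)]
  field_simp
  nlinarith [mul_le_mul_of_nonneg_left hab ha.le]

theorem stmt1_general {ℓ n m K : ℕ} (hK : 1 ≤ K)
    (D : Finset (Fin n → Fin ℓ)) (hD : D.Nonempty)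
    (t : Fin K → GDT ℓ n m) (f : Fin K → (Fin n → Fin ℓ) → Fin m)
    (htree : ∀ ζ, (t ζ).TreeWF) (hcol : ∀ ζ, (t ζ).ColorWF)
    (hdec : ∀ ζ, ∀ x ∈ D, (t ζ).output x = f ζ x)
    (T G : ℝ)
    (hT : T = D.sup' hD fun x => (∑ ζ, ((t ζ).pathLen x : ℝ)) / K)
    (hG : G = D.sup' hD fun x => (∑ ζ, ((t ζ).redCount x : ℝ)) / K)
    (hGpos : 0 < G) :
    ∃ (d : ℕ) (u w : (Fin n → Fin ℓ) → Fin n → EuclideanSpace ℂ (Fin d)),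
      (∀ x ∈ D, ∀ y ∈ D,
          ∑ j ∈ Finset.univ.filter (fun j => x j ≠ y j), ⟪u x j, w y j⟫_ℂ
            = 1 - ((Finset.univ.filter fun ζ : Fin K => f ζ x = f ζ y).card : ℂ) / K) ∧
      (∀ x ∈ D, ∑ j, ‖u x j‖ ^ 2 ≤ 12 * Real.sqrt (G * T)) ∧
      (∀ x ∈ D, ∑ j, ‖w x j‖ ^ 2 ≤ 12 * Real.sqrt (G * T)) := by
  have hGT : G ≤ T := by
    rw [hG, hT]
    exact Finset.sup'_mono_fun fun x _ => by
      gcongr with ζ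
      exact_mod_cast (t ζ).redCount_le_pathLen x
  obtain ⟨s, hs, hscale⟩ := exists_scale_le hGpos hGT
  set A := Finset.univ.biUnion fun ζ => (t ζ).addrs
  have hA : ∀ ζ, (t ζ).addrs ⊆ A := fun ζ =>
    Finset.subset_biUnion_of_mem (fun ζ => (t ζ).addrs) (Finset.mem_univ ζ)
  have hred : ∀ x ∈ D, (∑ ζ, ((t ζ).redCount x : ℝ)) / K ≤ G := fun x hx =>
    hG ▸ Finset.le_sup' (fun x => (∑ ζ, ((t ζ).redCount x : ℝ)) / K) hx
  have hlen : ∀ x ∈ D, (∑ ζ, ((t ζ).pathLen x : ℝ)) / K ≤ T := fun x hx =>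
    hT ▸ Finset.le_sup' (fun x => (∑ ζ, ((t ζ).pathLen x : ℝ)) / K) hx
  refine ⟨_, fun x j => toEuclid (dualVec t A (edgeVecU s) plusVec x j),
    fun y j => toEuclid (dualVec t A (edgeVecW s) minusVec y j),
    fun x hx y hy => ?_, fun x hx => ?_, fun x hx => ?_⟩
  · simp only [inner_toEuclid, ← Complex.ofReal_sum]
    rw [sum_dualVec_dotProduct_eq (by omega) htree hcol hA (edgeVecU_dotProduct_edgeVecW_self s)
      (fun _ _ _ _ => edgeVecU_dotProduct_edgeVecW_of_ne hs) plusVec_dotProduct_minusVec]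
    simp only [hdec _ x hx, hdec _ y hy]
    push_cast
    rfl
  · simpa only [norm_toEuclid_sq] using (sum_dualVec_dotProduct_self_le_of_avg_le htree hA
      (edgeVecU_dotProduct_self s) plusVec_dotProduct_self (hred x hx) (hlen x hx)).trans hscale
  · simpa only [norm_toEuclid_sq] using (sum_dualVec_dotProduct_self_le_of_avg_le htree hA
      (edgeVecW_dotProduct_self s) minusVec_dotProduct_self (hred x hx) (hlen x hx)).trans hscale

/-- **Theorem 4.1(ii), dual-adversary feasibility form for randomized decision trees.**
Given `K` generalized decision trees with G-colorings, read-once along paths, tree `ζ`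
deciding `f ζ : D → Fin m`, with `T` the maximum over `x ∈ D` of the average path length
and `G` the maximum over `x ∈ D` of the average number of red edges, there is a feasible
solution of the dual adversary SDP for the gram matrix
`(1 - (1/K)·|{ζ : f ζ x = f ζ y}|)_{x,y}` with objective value at most `12 * √(G * T)`. -/
theorem stmt1 {ℓ n m K : ℕ} (hl : 1 ≤ ℓ) (hn : 1 ≤ n) (hm : 1 ≤ m) (hK : 1 ≤ K)
    (D : Finset (Fin n → Fin ℓ)) (hD : D.Nonempty)
    (t : Fin K → GDT ℓ n m) (f : Fin K → (Fin n → Fin ℓ) → Fin m)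
    (htree : ∀ ζ, (t ζ).TreeWF) (hcol : ∀ ζ, (t ζ).ColorWF) (hro : ∀ ζ, (t ζ).ReadOnce)
    (hdec : ∀ ζ, ∀ x ∈ D, (t ζ).output x = f ζ x)
    (T G : ℝ)
    (hT : T = D.sup' hD fun x => (∑ ζ, ((t ζ).pathLen x : ℝ)) / K)
    (hG : G = D.sup' hD fun x => (∑ ζ, ((t ζ).redCount x : ℝ)) / K)
    (hTpos : 0 < T) (hGpos : 0 < G) :
    ∃ (d : ℕ) (u w : (Fin n → Fin ℓ) → Fin n → EuclideanSpace ℂ (Fin d)),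
      (∀ x ∈ D, ∀ y ∈ D,
          ∑ j ∈ Finset.univ.filter (fun j => x j ≠ y j), ⟪u x j, w y j⟫_ℂ
            = 1 - ((Finset.univ.filter fun ζ : Fin K => f ζ x = f ζ y).card : ℂ) / K) ∧
      (∀ x ∈ D, ∑ j, ‖u x j‖ ^ 2 ≤ 12 * Real.sqrt (G * T)) ∧
      (∀ x ∈ D, ∑ j, ‖w x j‖ ^ 2 ≤ 12 * Real.sqrt (G * T)) :=
  stmt1_general hK D hD t f htree hcol hdec T G hT hG hGpos
end

section
/- (Theorem 4.2, dual-adversary feasibility form with segment-dependent weights.) Let ℓ, n, m, K ≥ 1, let D ⊆ [ℓ]^n be a finite set, and for each ζ ∈ {1, …, K} let 𝒯_ζ be a generalized decision tree with a G-coloring that is read-once along paths and decides a function f_ζ : D → [m]. For x ∈ D let G_x^ζ be the number of red edges on the computation path P_x^ζ of x in 𝒯_ζ; for 1 ≤ g ≤ G_x^ζ let T_{g,x}^ζ be the number of black edges of P_x^ζ strictly after the g-th red edge and before the (g+1)-st red edge, let T_{0,x}^ζ be the number of black edges before the first red edge, and set T_{g,x}^ζ = 0 for g > G_x^ζ. Let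 G = max_{x,ζ} G_x^ζ and T_g = max_{x ∈ D} (1/K)·Σ_{ζ=1}^K T_{g,x}^ζ for 0 ≤ g ≤ G. Then there exist a finite-dimensional complex inner product space H and vectors u_{x,j}, w_{x,j} ∈ H for x ∈ D and 1 ≤ j ≤ n such that: (a) for all x, y ∈ D, Σ_{j : x_j ≠ y_j} ⟨u_{x,j}, w_{y,j}⟩ = 1 − (1/K)·|{ζ : f_ζ(x) = f_ζ(y)}|; and (b) for every x ∈ D, Σ_{j=1}^n ‖u_{x,j}‖² ≤ 12·Σ_{g=0}^G (1 + √(T_g)) and Σ_{j=1}^n ‖w_{x,j}‖² ≤ 12·Σ_{g=0}^G (1 + √(T_g)). -/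
open scoped InnerProductSpace

namespace GDT

variable {ℓ n m : ℕ}

/-- The list of colors of the edges of the computation path of input `x`, from the root
to the leaf (`true` = black, `false` = red). -/
def pathColors : GDT ℓ n m → (Fin n → Fin ℓ) → List Bool
  | .leaf _, _ => []
  | .node J _ color child, x => color (x J) :: pathColors (child (x J)) x

end GDT

/-- Given the list of colors of a path (`true` = black, `false` = red), `segBlack L g`
is the number of black edges strictly after the `g`-th red edge and before the
`(g+1)`-st red edge (`segBlack L 0` is the number of black edges before the first red
edge); it is `0` when `g` exceeds the number of red edges. -/
def segBlack : List Bool → ℕ → ℕ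
  | [], _ => 0
  | true :: L, 0 => segBlack L 0 + 1
  | true :: L, g + 1 => segBlack L (g + 1)
  | false :: _, 0 => 0
  | false :: L, g + 1 => segBlack L g
/-!
Fix a tree. For every coordinate `j` queried on the path of `x`, the vector `u_{x,j}` is the
indicator of the vertex querying `j`, tensored with an edge gadget and with a label vector of
the output: `u = e_v ⊗ a ⊗ (e_∗ + e_{f x})`, `w = e_v ⊗ b ⊗ (e_∗ - e_{f y})`. At a common
vertex the gadgets satisfy `⟪a, b⟫ = 1` if the two edges taken are different and `0` otherwise:
two red edges meet in the indicator of their class, a red and a black edge meet in a pair of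
weight coordinates carrying `√s` and `(√s)⁻¹`, and two black edges coincide. As the labels
contribute `[f x ≠ f y]`, summing over the `j` with `x j ≠ y j` leaves only the vertex where
the paths of `x` and `y` part, so every tree contributes `[f x ≠ f y]`; averaging the `K`
trees gives the identity.

A black edge of segment `g` costs `2 / s_g` and a red edge closing it costs `2 (s_g + 2)`.
With `s_g = 1 + √T_g` the averaged cost of segment `g` is at most
`2 T_g / (1 + √T_g) + 2 (3 + √T_g) ≤ 12 (1 + √T_g)`.
-/

open Finset

section DotProduct

variable {α β : Type*} [Fintype α] [Fintype β]

def vecTensor (v : α → ℝ) (w : β → ℝ) : α × β → ℝ := fun p => v p.1 * w p.2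

theorem vecTensor_dotProduct_vecTensor (v v' : α → ℝ) (w w' : β → ℝ) :
    vecTensor v w ⬝ᵥ vecTensor v' w' = (v ⬝ᵥ v') * (w ⬝ᵥ w') := by
  simp only [dotProduct, vecTensor, Fintype.sum_prod_type, Fintype.sum_mul_sum]
  exact sum_congr rfl fun _ _ => sum_congr rfl fun _ _ => by ring

noncomputable def avgStack (F : α → β → ℝ) : α × β → ℝ :=
  fun p => (√(Fintype.card α))⁻¹ * F p.1 p.2

theorem avgStack_dotProduct_avgStack (F G : α → β → ℝ) :
    avgStack F ⬝ᵥ avgStack G = (∑ a, F a ⬝ᵥ G a) / Fintype.card α := by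
  have hscale : (√(Fintype.card α : ℝ))⁻¹ * (√(Fintype.card α))⁻¹ = (Fintype.card α : ℝ)⁻¹ := by
    rw [← mul_inv, Real.mul_self_sqrt (Nat.cast_nonneg _)]
  simp only [dotProduct, avgStack, Fintype.sum_prod_type, div_eq_mul_inv, sum_mul, ← hscale]
  exact sum_congr rfl fun _ _ => sum_congr rfl fun _ _ => by ring

noncomputable def complexify (v : α → ℝ) : EuclideanSpace ℂ (Fin (Fintype.card α)) :=
  WithLp.toLp 2 fun i => (v ((Fintype.equivFin α).symm i) : ℂ)

theorem inner_complexify (v w : α → ℝ) :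
    ⟪complexify v, complexify w⟫_ℂ = ((v ⬝ᵥ w : ℝ) : ℂ) := by
  simp only [complexify, PiLp.inner_apply, dotProduct, Complex.ofReal_sum, Complex.ofReal_mul]
  rw [← (Fintype.equivFin α).symm.sum_comp]
  simp [mul_comm]

theorem norm_complexify_sq (v : α → ℝ) : ‖complexify v‖ ^ 2 = v ⬝ᵥ v := by
  have h := inner_complexify v v
  rw [inner_self_eq_norm_sq_to_K] at h
  exact Complex.ofReal_injective (by simpa using h)

end DotProduct

section Gadget

variable {ℓ m : ℕ}

noncomputable def gadgetU (s : ℝ) (q : Fin ℓ) : Bool → Fin 3 ⊕ Fin ℓ → ℝ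
  | true => Sum.elim ![0, (√s)⁻¹, 0] 0
  | false => Sum.elim ![√s, 0, 1] (Pi.single q 1)

noncomputable def gadgetW (s : ℝ) (q : Fin ℓ) : Bool → Fin 3 ⊕ Fin ℓ → ℝ
  | true => Sum.elim ![(√s)⁻¹, 0, 0] 0
  | false => Sum.elim ![0, √s, 1] (-Pi.single q 1)

theorem gadgetU_dotProduct_gadgetW {s : ℝ} (hs : 0 < s) {q q' : Fin ℓ} {c c' : Bool}
    (hcolor : q = q' → c = c') (hblack : c = true → c' = true → q = q') :
    gadgetU s q c ⬝ᵥ gadgetW s q' c' = if q = q' then 0 else 1 := by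
  have hs' : √s ≠ 0 := (Real.sqrt_pos.2 hs).ne'
  cases c <;> cases c'
  case false.false =>
    simp [gadgetU, gadgetW, sumElim_dotProduct_sumElim, Pi.single_apply, eq_comm]
    split_ifs <;> ring
  case true.true => simp [gadgetU, gadgetW, sumElim_dotProduct_sumElim, hblack rfl rfl]
  all_goals
    have hq : q ≠ q' := fun h => by simpa using hcolor h
    simp [gadgetU, gadgetW, sumElim_dotProduct_sumElim, hs', hq]

noncomputable def gadgetCost (s : ℝ) : Bool → ℝ
  | true => s⁻¹
  | false => s + 2

theorem gadgetU_dotProduct_self {s : ℝ} (hs : 0 ≤ s) (q : Fin ℓ) (c : Bool) :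
    gadgetU s q c ⬝ᵥ gadgetU s q c = gadgetCost s c := by
  cases c <;> simp [gadgetU, gadgetCost, sumElim_dotProduct_sumElim, ← sq, hs]; ring

theorem gadgetW_dotProduct_self {s : ℝ} (hs : 0 ≤ s) (q : Fin ℓ) (c : Bool) :
    gadgetW s q c ⬝ᵥ gadgetW s q c = gadgetCost s c := by
  cases c <;> simp [gadgetW, gadgetCost, sumElim_dotProduct_sumElim, ← sq, hs]; ring

def labelU (o : Fin m) : Option (Fin m) → ℝ := Pi.single none 1 + Pi.single (some o) 1

def labelW (o : Fin m) : Option (Fin m) → ℝ := Pi.single none 1 - Pi.single (some o) 1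

theorem labelU_dotProduct_labelW (o o' : Fin m) :
    labelU o ⬝ᵥ labelW o' = if o = o' then 0 else 1 := by
  simp [labelU, labelW, dotProduct_sub, Pi.single_apply, eq_comm]
  split_ifs <;> ring

theorem labelU_dotProduct_self (o : Fin m) : labelU o ⬝ᵥ labelU o = 2 := by
  simp [labelU, dotProduct_add]; norm_num

theorem labelW_dotProduct_self (o : Fin m) : labelW o ⬝ᵥ labelW o = 2 := by
  simp [labelW, dotProduct_sub]; norm_num

end Gadget

section PathCost

noncomputable def pathCost (φ : ℕ → Bool → ℝ) : List Bool → ℕ → ℝ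
  | [], _ => 0
  | c :: L, g₀ => φ g₀ c + pathCost φ L (if c then g₀ else g₀ + 1)

theorem pathCost_eq_sum_segBlack (φ : ℕ → Bool → ℝ) (L : List Bool) (g₀ : ℕ) :
    pathCost φ L g₀ = ∑ g ∈ range (L.count false + 1), segBlack L g * φ (g₀ + g) true
      + ∑ g ∈ range (L.count false), φ (g₀ + g) false := by
  induction L generalizing g₀ with
  | nil => simp [pathCost, segBlack]
  | cons c L ih =>
    cases c
    · have hshift : ∀ g, g₀ + 1 + g = g₀ + g + 1 := fun g => by omega
      rw [pathCost, ih, List.count_cons_self,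
        sum_range_succ' (fun g => (segBlack (false :: L) g : ℝ) * φ (g₀ + g) true),
        sum_range_succ' (fun g => φ (g₀ + g) false)]
      simp only [segBlack, Bool.false_eq_true, if_false, hshift, ← add_assoc, add_zero,
        Nat.cast_zero, zero_mul]
      ring
    · have hseg : ∀ g, (segBlack (true :: L) g : ℝ) = segBlack L g + if g = 0 then 1 else 0 := by
        rintro (_ | g) <;> simp [segBlack]
      simp only [pathCost, ih, List.count_cons_of_ne (show true ≠ false by decide), hseg,
        add_mul, sum_add_distrib, ite_mul, one_mul, zero_mul, sum_ite_eq', mem_range,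
        Nat.zero_lt_succ, if_true, add_zero]
      ring

theorem pathCost_le_sum_range {φ : ℕ → Bool → ℝ} (hφ : ∀ g c, 0 ≤ φ g c) {L : List Bool}
    {G : ℕ} (hL : L.count false ≤ G) :
    pathCost φ L 0 ≤ ∑ g ∈ range (G + 1), (segBlack L g * φ g true + φ g false) := by
  rw [pathCost_eq_sum_segBlack, sum_add_distrib]
  simp only [zero_add]
  exact add_le_add
    (sum_le_sum_of_subset_of_nonneg (range_subset_range.2 (by omega)) fun g _ _ =>
      mul_nonneg (Nat.cast_nonneg _) (hφ g true))
    (sum_le_sum_of_subset_of_nonneg (range_subset_range.2 (by omega)) fun g _ _ => hφ g false)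

theorem segment_cost_le {T : ℝ} (hT : 0 ≤ T) :
    T * (2 * gadgetCost (1 + √T) true) + 2 * gadgetCost (1 + √T) false ≤ 12 * (1 + √T) := by
  have hsqrt := Real.sqrt_nonneg T
  have hdiv : T * (1 + √T)⁻¹ ≤ √T := by
    rw [mul_inv_le_iff₀ (by positivity)]
    nlinarith [Real.sq_sqrt hT]
  simp only [gadgetCost]
  nlinarith

theorem avg_pathCost_le {ι : Type*} [Fintype ι] (L : ι → List Bool) {G : ℕ}
    (hL : ∀ i, (L i).count false ≤ G) (T : ℕ → ℝ)
    (hT : ∀ g ≤ G, (∑ i, (segBlack (L i) g : ℝ)) / Fintype.card ι ≤ T g) :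
    (∑ i, pathCost (fun g c => 2 * gadgetCost (1 + √(T g)) c) (L i) 0) / Fintype.card ι
      ≤ 12 * ∑ g ∈ range (G + 1), (1 + √(T g)) := by
  set φ : ℕ → Bool → ℝ := fun g c => 2 * gadgetCost (1 + √(T g)) c
  have hφ : ∀ g c, 0 ≤ φ g c := fun g c => by cases c <;> simp [φ, gadgetCost] <;> positivity
  calc (∑ i, pathCost φ (L i) 0) / Fintype.card ι
      ≤ (∑ i, ∑ g ∈ range (G + 1), (segBlack (L i) g * φ g true + φ g false))
          / Fintype.card ι := by
        gcongr with i
        exact pathCost_le_sum_range hφ (hL i)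
    _ = ∑ g ∈ range (G + 1), ((∑ i, (segBlack (L i) g : ℝ)) / Fintype.card ι * φ g true
          + (Fintype.card ι : ℝ) / Fintype.card ι * φ g false) := by
        rw [sum_comm, sum_div]
        refine sum_congr rfl fun g _ => ?_
        rw [sum_add_distrib, ← sum_mul, sum_const, card_univ, nsmul_eq_mul]
        ring
    _ ≤ ∑ g ∈ range (G + 1), (T g * φ g true + φ g false) := by
        refine sum_le_sum fun g hg => ?_
        gcongr
        · exact hφ g true
        · exact hT g (Nat.lt_succ_iff.1 (mem_range.1 hg))
        · exact mul_le_of_le_one_left (hφ g false) (div_self_le_one _)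
    _ ≤ 12 * ∑ g ∈ range (G + 1), (1 + √(T g)) := by
        rw [mul_sum]
        refine sum_le_sum fun g hg => segment_cost_le ?_
        have havg := hT g (Nat.lt_succ_iff.1 (mem_range.1 hg))
        exact le_trans (by positivity) havg

end PathCost

structure Visit (ℓ n : ℕ) where
  answers : Fin n → Option (Fin ℓ)
  reds : ℕ
  cls : Fin ℓ
  color : Bool

namespace GDT

variable {ℓ n m : ℕ}

/-- Vertices are identified by the classes answered on the path to them, indexed by query index
(read-once paths never overwrite an answer); `σ` and `g` are the answers and the number of red
edges accumulated above `t`. -/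
def visit : GDT ℓ n m → (Fin n → Fin ℓ) → (Fin n → Option (Fin ℓ)) → ℕ → Fin n →
    Option (Visit ℓ n)
  | .leaf _, _, _, _, _ => none
  | .node J Q color child, x, σ, g, j =>
    if j = J then some ⟨σ, g, Q (x J), color (x J)⟩
    else visit (child (x J)) x (Function.update σ J (some (Q (x J))))
      (if color (x J) then g else g + 1) j

theorem visit_eq_none {t : GDT ℓ n m} {s : Finset (Fin n)} (hro : t.ReadOnceFrom s)
    {j : Fin n} (hj : j ∈ s) (x : Fin n → Fin ℓ) (σ : Fin n → Option (Fin ℓ)) (g : ℕ) :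
    t.visit x σ g j = none := by
  induction t generalizing s σ g with
  | leaf => rfl
  | node J Q color child ih =>
    have hjJ : j ≠ J := fun h => hro.1 (h ▸ hj)
    simp only [visit, if_neg hjJ]
    exact ih _ (hro.2 _) (mem_insert_of_mem hj) _ _

theorem answers_visit {t : GDT ℓ n m} {s : Finset (Fin n)} (hro : t.ReadOnceFrom s)
    {i : Fin n} (hi : i ∈ s) {x : Fin n → Fin ℓ} {σ : Fin n → Option (Fin ℓ)} {g : ℕ}
    {j : Fin n} {v : Visit ℓ n} (hv : t.visit x σ g j = some v) : v.answers i = σ i := by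
  induction t generalizing s σ g with
  | leaf => cases hv
  | node J Q color child ih =>
    have hiJ : i ≠ J := fun h => hro.1 (h ▸ hi)
    by_cases hjJ : j = J
    · simp only [visit, if_pos hjJ, Option.some.injEq] at hv
      rw [← hv]
    · simp only [visit, if_neg hjJ] at hv
      rw [ih _ (hro.2 _) (mem_insert_of_mem hi) hv, Function.update_of_ne hiJ]

theorem sum_filter_ne_pair_visit (P : Option (Visit ℓ n) → Option (Visit ℓ n) → ℝ) (β : ℝ)
    (hnone_left : ∀ o, P none o = 0) (hnone_right : ∀ o, P o none = 0)
    (hanswers : ∀ v v' : Visit ℓ n, v.answers ≠ v'.answers → P (some v) (some v') = 0)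
    (hvertex : ∀ σ g q c q' c', (q = q' → c = c') → (c = true → c' = true → q = q') →
      P (some ⟨σ, g, q, c⟩) (some ⟨σ, g, q', c'⟩) = if q = q' then 0 else β)
    (x y : Fin n → Fin ℓ) {t : GDT ℓ n m} {s : Finset (Fin n)} (htree : t.TreeWF)
    (hcol : t.ColorWF) (hro : t.ReadOnceFrom s) (hβ : t.output x = t.output y → β = 0)
    (σ : Fin n → Option (Fin ℓ)) (g : ℕ) :
    ∑ j ∈ univ.filter (fun j => x j ≠ y j), P (t.visit x σ g j) (t.visit y σ g j)
      = if t.output x = t.output y then 0 else β := by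
  induction t generalizing s σ g with
  | leaf => simp [visit, output, hnone_left]
  | node J Q color child ih =>
    obtain ⟨-, hchild, htree⟩ := htree
    obtain ⟨hcolQ, hblack, hcol⟩ := hcol
    have hcolor : Q (x J) = Q (y J) → color (x J) = color (y J) := fun h => by
      rw [← hcolQ, h, hcolQ]
    have hJ : P (some ⟨σ, g, Q (x J), color (x J)⟩) (some ⟨σ, g, Q (y J), color (y J)⟩)
        = if Q (x J) = Q (y J) then 0 else β :=
      hvertex _ _ _ _ _ _ hcolor (hblack _ _)
    set σ' := Function.update σ J (some (Q (x J)))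
    set g' := if color (x J) then g else g + 1
    by_cases hq : Q (x J) = Q (y J)
    · have hsame : child (x J) = child (y J) := by rw [← hchild, hq, hchild]
      have hterm : ∀ j,
          P ((node J Q color child).visit x σ g j) ((node J Q color child).visit y σ g j)
            = P ((child (x J)).visit x σ' g' j) ((child (x J)).visit y σ' g' j) := by
        intro j
        by_cases hjJ : j = J
        · subst hjJ
          simp only [visit, if_true, hJ, if_pos hq,
            visit_eq_none (hro.2 _) (mem_insert_self _ _), hnone_left]
        · simp only [visit, if_neg hjJ, σ', g', hsame, hq, hcolor hq]
      have houty : (node J Q color child).output y = (child (x J)).output y := by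
        rw [hsame]; rfl
      rw [sum_congr rfl fun j _ => hterm j, ih _ (htree _) (hcol _) (hro.2 _)
        (by rwa [← houty]) _ _, houty]
      rfl
    · have hxy : x J ≠ y J := fun h => hq (h ▸ rfl)
      have hparted : ∀ j ≠ J,
          P ((node J Q color child).visit x σ g j) ((node J Q color child).visit y σ g j)
            = 0 := by
        intro j hjJ
        simp only [visit, if_neg hjJ]
        rcases hvx : visit _ x _ _ j with _ | vx
        · exact hnone_left _
        rcases hvy : visit _ y _ _ j with _ | vy
        · exact hnone_right _
        refine hanswers _ _ fun h => hq ?_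
        have hx := answers_visit (hro.2 _) (mem_insert_self J s) hvx
        have hy := answers_visit (hro.2 _) (mem_insert_self J s) hvy
        simpa [h, hy] using hx.symm
      rw [sum_eq_single_of_mem J (by simpa using hxy) fun j _ => hparted j]
      simp only [visit, if_true, hJ, if_neg hq]
      split_ifs with hout
      exacts [hβ hout, rfl]

theorem sum_visit (F : Option (Visit ℓ n) → ℝ) (φ : ℕ → Bool → ℝ) (hnone : F none = 0)
    (hsome : ∀ v, F (some v) = φ v.reds v.color) {t : GDT ℓ n m} {s : Finset (Fin n)}
    (hro : t.ReadOnceFrom s) (x : Fin n → Fin ℓ) (σ : Fin n → Option (Fin ℓ)) (g : ℕ) :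
    ∑ j, F (t.visit x σ g j) = pathCost φ (t.pathColors x) g := by
  induction t generalizing s σ g with
  | leaf => simp [visit, pathColors, pathCost, hnone]
  | node J Q color child ih =>
    have hterm : ∀ j, F ((node J Q color child).visit x σ g j)
        = (if j = J then φ g (color (x J)) else 0)
          + F ((child (x J)).visit x (Function.update σ J (some (Q (x J))))
              (if color (x J) then g else g + 1) j) := by
      intro j
      by_cases hjJ : j = J
      · subst hjJ
        simp [visit, hsome, visit_eq_none (hro.2 _) (mem_insert_self _ _), hnone]
      · simp [visit, hjJ]
    rw [sum_congr rfl fun j _ => hterm j, sum_add_distrib, sum_ite_eq',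
      if_pos (mem_univ _), ih _ (hro.2 _)]
    rfl

theorem count_false_pathColors (t : GDT ℓ n m) (x : Fin n → Fin ℓ) :
    (t.pathColors x).count false = t.redCount x := by
  induction t with
  | leaf => rfl
  | node J Q color child ih =>
    cases h : color (x J) <;> simp [pathColors, redCount, h, ih]

end GDT

section VisitVectors

abbrev VisitIndex (ℓ n m : ℕ) : Type := (Fin n → Option (Fin ℓ)) × (Fin 3 ⊕ Fin ℓ) × Option (Fin m)

variable {ℓ n m : ℕ}

noncomputable def visitVecU (s : ℕ → ℝ) (o : Fin m) :
    Option (Visit ℓ n) → VisitIndex ℓ n m → ℝ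
  | none => 0
  | some v => vecTensor (Pi.single v.answers 1)
      (vecTensor (gadgetU (s v.reds) v.cls v.color) (labelU o))

noncomputable def visitVecW (s : ℕ → ℝ) (o : Fin m) :
    Option (Visit ℓ n) → VisitIndex ℓ n m → ℝ
  | none => 0
  | some v => vecTensor (Pi.single v.answers 1)
      (vecTensor (gadgetW (s v.reds) v.cls v.color) (labelW o))

theorem visitVecU_dotProduct_visitVecW (s : ℕ → ℝ) (o o' : Fin m) (v v' : Visit ℓ n) :
    visitVecU s o (some v) ⬝ᵥ visitVecW s o' (some v')
      = (if v.answers = v'.answers then 1 else 0)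
        * ((gadgetU (s v.reds) v.cls v.color ⬝ᵥ gadgetW (s v'.reds) v'.cls v'.color)
          * if o = o' then 0 else 1) := by
  simp only [visitVecU, visitVecW, vecTensor_dotProduct_vecTensor, labelU_dotProduct_labelW,
    single_dotProduct, one_mul, Pi.single_apply]

theorem visitVecU_dotProduct_self {s : ℕ → ℝ} (hs : ∀ g, 0 ≤ s g) (o : Fin m)
    (v : Visit ℓ n) :
    visitVecU s o (some v) ⬝ᵥ visitVecU s o (some v) = 2 * gadgetCost (s v.reds) v.color := by
  simp [visitVecU, vecTensor_dotProduct_vecTensor, labelU_dotProduct_self,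
    gadgetU_dotProduct_self (hs _), mul_comm]

theorem visitVecW_dotProduct_self {s : ℕ → ℝ} (hs : ∀ g, 0 ≤ s g) (o : Fin m)
    (v : Visit ℓ n) :
    visitVecW s o (some v) ⬝ᵥ visitVecW s o (some v) = 2 * gadgetCost (s v.reds) v.color := by
  simp [visitVecW, vecTensor_dotProduct_vecTensor, labelW_dotProduct_self,
    gadgetW_dotProduct_self (hs _), mul_comm]

end VisitVectors

namespace GDT

variable {ℓ n m : ℕ}

theorem sum_visitVecU_dotProduct_visitVecW {s : ℕ → ℝ} (hs : ∀ g, 0 < s g) {t : GDT ℓ n m}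
    (htree : t.TreeWF) (hcol : t.ColorWF) (hro : t.ReadOnce) (x y : Fin n → Fin ℓ) :
    ∑ j ∈ univ.filter (fun j => x j ≠ y j),
        visitVecU s (t.output x) (t.visit x (fun _ => none) 0 j)
          ⬝ᵥ visitVecW s (t.output y) (t.visit y (fun _ => none) 0 j)
      = if t.output x = t.output y then 0 else 1 := by
  rw [sum_filter_ne_pair_visit
    (fun a b => visitVecU s (t.output x) a ⬝ᵥ visitVecW s (t.output y) b)
    (if t.output x = t.output y then 0 else 1)
    (fun _ => zero_dotProduct _) (fun o => by cases o <;> exact dotProduct_zero _)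
    (fun v v' hv => by simp [visitVecU_dotProduct_visitVecW, hv])
    (fun σ g q c q' c' hcolor hblack => by
      simp only [visitVecU_dotProduct_visitVecW, if_true, one_mul,
        gadgetU_dotProduct_gadgetW (hs g) hcolor hblack]
      split_ifs <;> simp)
    x y htree hcol hro (fun h => if_pos h)]
  split_ifs <;> rfl

theorem sum_visitVecU_dotProduct_self {s : ℕ → ℝ} (hs : ∀ g, 0 ≤ s g) {t : GDT ℓ n m}
    (hro : t.ReadOnce) (o : Fin m) (x : Fin n → Fin ℓ) :
    ∑ j, visitVecU s o (t.visit x (fun _ => none) 0 j)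
        ⬝ᵥ visitVecU s o (t.visit x (fun _ => none) 0 j)
      = pathCost (fun g c => 2 * gadgetCost (s g) c) (t.pathColors x) 0 :=
  sum_visit (fun a => visitVecU s o a ⬝ᵥ visitVecU s o a) _ (zero_dotProduct _)
    (visitVecU_dotProduct_self hs o) hro x _ 0

theorem sum_visitVecW_dotProduct_self {s : ℕ → ℝ} (hs : ∀ g, 0 ≤ s g) {t : GDT ℓ n m}
    (hro : t.ReadOnce) (o : Fin m) (x : Fin n → Fin ℓ) :
    ∑ j, visitVecW s o (t.visit x (fun _ => none) 0 j)
        ⬝ᵥ visitVecW s o (t.visit x (fun _ => none) 0 j)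
      = pathCost (fun g c => 2 * gadgetCost (s g) c) (t.pathColors x) 0 :=
  sum_visit (fun a => visitVecW s o a ⬝ᵥ visitVecW s o a) _ (zero_dotProduct _)
    (visitVecW_dotProduct_self hs o) hro x _ 0

end GDT
section Family

variable {ι : Type*} [Fintype ι] {ℓ n m : ℕ}

noncomputable def dualU (s : ℕ → ℝ) (t : ι → GDT ℓ n m) (x : Fin n → Fin ℓ) (j : Fin n) :
    ι × VisitIndex ℓ n m → ℝ :=
  avgStack fun i => visitVecU s ((t i).output x) ((t i).visit x (fun _ => none) 0 j)

noncomputable def dualW (s : ℕ → ℝ) (t : ι → GDT ℓ n m) (y : Fin n → Fin ℓ) (j : Fin n) :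
    ι × VisitIndex ℓ n m → ℝ :=
  avgStack fun i => visitVecW s ((t i).output y) ((t i).visit y (fun _ => none) 0 j)

theorem sum_filter_ne_dualU_dotProduct_dualW [Nonempty ι] {s : ℕ → ℝ} (hs : ∀ g, 0 < s g)
    {t : ι → GDT ℓ n m} (htree : ∀ i, (t i).TreeWF) (hcol : ∀ i, (t i).ColorWF)
    (hro : ∀ i, (t i).ReadOnce) (x y : Fin n → Fin ℓ) :
    ∑ j ∈ univ.filter (fun j => x j ≠ y j), dualU s t x j ⬝ᵥ dualW s t y j
      = 1 - (univ.filter fun i => (t i).output x = (t i).output y).card / Fintype.card ι := by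
  have hcard := card_filter_add_card_filter_not (s := univ)
    fun i => (t i).output x = (t i).output y
  simp only [dualU, dualW, avgStack_dotProduct_avgStack, ← sum_div]
  rw [sum_comm, eq_sub_iff_add_eq, ← add_div,
    div_eq_one_iff_eq (Nat.cast_ne_zero.2 Fintype.card_ne_zero)]
  simp only [GDT.sum_visitVecU_dotProduct_visitVecW hs (htree _) (hcol _) (hro _), sum_ite,
    sum_const_zero, zero_add, sum_const, nsmul_eq_mul, mul_one]
  exact_mod_cast (add_comm _ _).trans hcard

theorem sum_dualU_dotProduct_self {s : ℕ → ℝ} (hs : ∀ g, 0 ≤ s g) {t : ι → GDT ℓ n m}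
    (hro : ∀ i, (t i).ReadOnce) (x : Fin n → Fin ℓ) :
    ∑ j, dualU s t x j ⬝ᵥ dualU s t x j
      = (∑ i, pathCost (fun g c => 2 * gadgetCost (s g) c) ((t i).pathColors x) 0)
        / Fintype.card ι := by
  simp only [dualU, avgStack_dotProduct_avgStack, ← sum_div]
  rw [sum_comm]
  simp only [GDT.sum_visitVecU_dotProduct_self hs (hro _)]

theorem sum_dualW_dotProduct_self {s : ℕ → ℝ} (hs : ∀ g, 0 ≤ s g) {t : ι → GDT ℓ n m}
    (hro : ∀ i, (t i).ReadOnce) (x : Fin n → Fin ℓ) :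
    ∑ j, dualW s t x j ⬝ᵥ dualW s t x j
      = (∑ i, pathCost (fun g c => 2 * gadgetCost (s g) c) ((t i).pathColors x) 0)
        / Fintype.card ι := by
  simp only [dualW, avgStack_dotProduct_avgStack, ← sum_div]
  rw [sum_comm]
  simp only [GDT.sum_visitVecW_dotProduct_self hs (hro _)]

end Family

theorem stmt2_general {ℓ n m K : ℕ} (hK : 1 ≤ K)
    (D : Finset (Fin n → Fin ℓ)) (hD : D.Nonempty)
    (t : Fin K → GDT ℓ n m) (f : Fin K → (Fin n → Fin ℓ) → Fin m)
    (htree : ∀ ζ, (t ζ).TreeWF) (hcol : ∀ ζ, (t ζ).ColorWF) (hro : ∀ ζ, (t ζ).ReadOnce)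
    (hdec : ∀ ζ, ∀ x ∈ D, (t ζ).output x = f ζ x)
    (G : ℕ) (hG : G = D.sup fun x => Finset.univ.sup fun ζ : Fin K => (t ζ).redCount x)
    (Tg : ℕ → ℝ)
    (hTg : ∀ g ≤ G,
      Tg g = D.sup' hD fun x => (∑ ζ, (segBlack ((t ζ).pathColors x) g : ℝ)) / K) :
    ∃ (d : ℕ) (u w : (Fin n → Fin ℓ) → Fin n → EuclideanSpace ℂ (Fin d)),
      (∀ x ∈ D, ∀ y ∈ D,
          ∑ j ∈ Finset.univ.filter (fun j => x j ≠ y j), ⟪u x j, w y j⟫_ℂ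
            = 1 - ((Finset.univ.filter fun ζ : Fin K => f ζ x = f ζ y).card : ℂ) / K) ∧
      (∀ x ∈ D, ∑ j, ‖u x j‖ ^ 2
          ≤ 12 * ∑ g ∈ Finset.range (G + 1), (1 + Real.sqrt (Tg g))) ∧
      (∀ x ∈ D, ∑ j, ‖w x j‖ ^ 2
          ≤ 12 * ∑ g ∈ Finset.range (G + 1), (1 + Real.sqrt (Tg g))) := by
  set s : ℕ → ℝ := fun g => 1 + √(Tg g)
  have hs : ∀ g, 0 < s g := fun g => by positivity
  have : Nonempty (Fin K) := ⟨⟨0, hK⟩⟩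
  have hred : ∀ x ∈ D, ∀ ζ, ((t ζ).pathColors x).count false ≤ G := fun x hx ζ => by
    rw [GDT.count_false_pathColors, hG]
    exact le_sup_of_le (f := fun x => univ.sup fun ζ => (t ζ).redCount x) hx
      (le_sup (f := fun ζ => (t ζ).redCount x) (mem_univ ζ))
  have hseg : ∀ x ∈ D, ∀ g ≤ G,
      (∑ ζ, (segBlack ((t ζ).pathColors x) g : ℝ)) / Fintype.card (Fin K) ≤ Tg g :=
    fun x hx g hg => by
      rw [Fintype.card_fin, hTg g hg]
      exact le_sup' (fun x => (∑ ζ, (segBlack ((t ζ).pathColors x) g : ℝ)) / K) hx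
  refine ⟨_, fun x j => complexify (dualU s t x j), fun x j => complexify (dualW s t x j),
    fun x hx y hy => ?_, fun x hx => ?_, fun x hx => ?_⟩
  · simp only [inner_complexify, sum_filter_ne_dualU_dotProduct_dualW hs htree hcol hro,
      hdec _ x hx, hdec _ y hy, ← Complex.ofReal_sum, Fintype.card_fin]
    push_cast
    rfl
  · simpa [norm_complexify_sq, sum_dualU_dotProduct_self (fun g => (hs g).le) hro]
      using avg_pathCost_le _ (hred x hx) Tg (hseg x hx)
  · simpa [norm_complexify_sq, sum_dualW_dotProduct_self (fun g => (hs g).le) hro]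
      using avg_pathCost_le _ (hred x hx) Tg (hseg x hx)

/-- **Theorem 4.2, dual-adversary feasibility form with segment-dependent weights.** -/
theorem stmt2 {ℓ n m K : ℕ} (hl : 1 ≤ ℓ) (hn : 1 ≤ n) (hm : 1 ≤ m) (hK : 1 ≤ K)
    (D : Finset (Fin n → Fin ℓ)) (hD : D.Nonempty)
    (t : Fin K → GDT ℓ n m) (f : Fin K → (Fin n → Fin ℓ) → Fin m)
    (htree : ∀ ζ, (t ζ).TreeWF) (hcol : ∀ ζ, (t ζ).ColorWF) (hro : ∀ ζ, (t ζ).ReadOnce)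
    (hdec : ∀ ζ, ∀ x ∈ D, (t ζ).output x = f ζ x)
    (G : ℕ) (hG : G = D.sup fun x => Finset.univ.sup fun ζ : Fin K => (t ζ).redCount x)
    (Tg : ℕ → ℝ)
    (hTg : ∀ g ≤ G,
      Tg g = D.sup' hD fun x => (∑ ζ, (segBlack ((t ζ).pathColors x) g : ℝ)) / K) :
    ∃ (d : ℕ) (u w : (Fin n → Fin ℓ) → Fin n → EuclideanSpace ℂ (Fin d)),
      (∀ x ∈ D, ∀ y ∈ D,
          ∑ j ∈ Finset.univ.filter (fun j => x j ≠ y j), ⟪u x j, w y j⟫_ℂ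
            = 1 - ((Finset.univ.filter fun ζ : Fin K => f ζ x = f ζ y).card : ℂ) / K) ∧
      (∀ x ∈ D, ∑ j, ‖u x j‖ ^ 2
          ≤ 12 * ∑ g ∈ Finset.range (G + 1), (1 + Real.sqrt (Tg g))) ∧
      (∀ x ∈ D, ∑ j, ‖w x j‖ ^ 2
          ≤ 12 * ∑ g ∈ Finset.range (G + 1), (1 + Real.sqrt (Tg g))) :=
  stmt2_general hK D hD t f htree hcol hro hdec G hG Tg hTg
end

section
/- (Positive witness of the span program of Theorem 3.1.) Let 𝒯 be a binary decision tree with a G-coloring, read-once along paths, with positive weights W_black, W_red. For x ∈ {0,1}^n let P_x be its computation path, leaf(x) its endpoint, T_x the length of P_x and G_x the number of red edges on P_x. Let w_x ∈ ℂ^{E(𝒯)} be the vector whose entry at each path edge (v, N(v, x_{J(v)})), for v an internal vertex on P_x, equals 1/√(W_{C(v, x_{J(v)})}), and whose entries at all other edges are 0. Then w_x is supported only on edges whose input vectors are available for x, it satisfies A·w_x = e_r − e_{leaf(x)} where r is the root, and ‖w_x‖² = Σ_{v ∈ P_x internal} 1/W_{C(v, x_{J(v)})} ≤ G_x/W_red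 + T_x/W_black. -/
open scoped InnerProductSpace

/-- A binary decision tree with input length `n`, with a coloring of its edges
(`true` = black, `false` = red): at `node J color child`, `J` is the query index,
`color q` the color of the outgoing edge labeled `q`, and `child q` the corresponding
child. -/
inductive BDT (n : ℕ) : Type where
  | leaf : BDT n
  | node (J : Fin n) (color : Bool → Bool) (child : Bool → BDT n) : BDT n

namespace BDT

variable {n : ℕ}

/-- G-coloring condition: every internal vertex has at most one black (`true`)
outgoing edge. -/
def ColorWF : BDT n → Prop
  | .leaf => True
  | .node _ color child =>
      ¬(color false = true ∧ color true = true) ∧ ∀ q, ColorWF (child q)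

/-- `t.ReadOnceFrom s`: no query index of `s` occurs in `t` and no query index is used
twice along a root-to-leaf path of `t`. -/
def ReadOnceFrom : BDT n → Finset (Fin n) → Prop
  | .leaf, _ => True
  | .node J _ child, s => J ∉ s ∧ ∀ q, ReadOnceFrom (child q) (insert J s)

/-- The tree is read-once along paths. -/
def ReadOnce (t : BDT n) : Prop := t.ReadOnceFrom ∅

/-- The vertex set `V(𝒯)`: vertices are identified with their addresses, i.e. the lists
of edge labels leading to them from the root `[]`. -/
def verts : BDT n → Finset (List Bool)
  | .leaf => {[]}
  | .node _ _ child =>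
      insert [] ((verts (child false)).image (false :: ·) ∪
        (verts (child true)).image (true :: ·))

/-- The set of (addresses of) internal vertices. -/
def internals : BDT n → Finset (List Bool)
  | .leaf => ∅
  | .node _ _ child =>
      insert [] ((internals (child false)).image (false :: ·) ∪
        (internals (child true)).image (true :: ·))

/-- The set of (addresses of) leaves. -/
def leaves : BDT n → Finset (List Bool)
  | .leaf => {[]}
  | .node _ _ child =>
      (leaves (child false)).image (false :: ·) ∪ (leaves (child true)).image (true :: ·)

/-- The query index at the vertex with address `v` (`none` if `v` is a leaf). -/
def queryAt : BDT n → List Bool → Option (Fin n)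
  | .leaf, _ => none
  | .node J _ _, [] => some J
  | .node _ _ child, q :: v => queryAt (child q) v

/-- `colorAt t v q` is the color `C(v, q)` of the outgoing edge of the vertex at address
`v` labeled `q` (junk value `true` if `v` is not an internal vertex). -/
def colorAt : BDT n → List Bool → Bool → Bool
  | .leaf, _, _ => true
  | .node _ color _, [], q => color q
  | .node _ _ child, p :: v, q => colorAt (child p) v q

/-- The address of the leaf reached by the computation path `P_x`. -/
def leafAddr : BDT n → (Fin n → Bool) → List Bool
  | .leaf, _ => []
  | .node J _ child, x => x J :: leafAddr (child (x J)) x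

/-- The list of addresses of the internal vertices on the computation path `P_x`. -/
def pathInternals : BDT n → (Fin n → Bool) → List (List Bool)
  | .leaf, _ => []
  | .node J _ child, x => [] :: (pathInternals (child (x J)) x).map (x J :: ·)

/-- The list of colors of the edges of the computation path `P_x`. -/
def pathColors : BDT n → (Fin n → Bool) → List Bool
  | .leaf, _ => []
  | .node J color child, x => color (x J) :: pathColors (child (x J)) x

/-- The standard basis vector `e_v` of `ℂ^{V(𝒯)}` (zero if `v` is not a vertex). -/
noncomputable def evec (t : BDT n) (v : List Bool) :
    EuclideanSpace ℂ {u // u ∈ t.verts} :=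
  if h : v ∈ t.verts then EuclideanSpace.single ⟨v, h⟩ 1 else 0

/-- The input vector `√(W_{C(v,q)})·(e_v − e_{N(v,q)})` of the edge `(v, N(v,q))`, with
weights `W : Bool → ℝ` (`W true = W_black`, `W false = W_red`). -/
noncomputable def inputVec (t : BDT n) (W : Bool → ℝ) (v : List Bool) (q : Bool) :
    EuclideanSpace ℂ {u // u ∈ t.verts} :=
  ((Real.sqrt (W (t.colorAt v q)) : ℝ) : ℂ) • (t.evec v - t.evec (v ++ [q]))

/-- The matrix `A : ℂ^{E(𝒯)} → ℂ^{V(𝒯)}` whose column at the edge `(v, N(v,q))` is the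
input vector of that edge. -/
noncomputable def spanMatrix (t : BDT n) (W : Bool → ℝ) :
    Matrix {u // u ∈ t.verts} ({v // v ∈ t.internals} × Bool) ℂ :=
  Matrix.of fun u e => t.inputVec W e.1.1 e.2 u

end BDT

/-!
On the computation path, the witness entry `1/√W_c` cancels the weight `√W_c` of the input
vector, so `A·w_x` is the sum of `e_v − e_{N(v,q)}` over the path edges, which telescopes to
`e_root − e_leaf`. The squared norm is the sum of `1/W_c` over the path edges, and each term
is at most `[c red]/W_red + 1/W_black`.
-/

lemma sum_map_inv_le (W : Bool → ℝ) (hW : ∀ c, 0 < W c) (l : List Bool) :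
    (l.map fun c => 1 / W c).sum ≤ (l.count false : ℝ) / W false + (l.length : ℝ) / W true := by
  induction l with
  | nil => simp
  | cons c l ih =>
    have := one_div_pos.2 (hW true)
    cases c
    · simp only [List.map_cons, List.sum_cons, List.count_cons_self, List.length_cons,
        Nat.cast_succ, add_div]
      linarith
    · simp only [List.map_cons, List.sum_cons, List.count_cons_of_ne (by decide : true ≠ false),
        List.length_cons, Nat.cast_succ, add_div]
      linarith

namespace BDT

variable {n : ℕ}

-- `(v, q)` is an edge of `P_x` iff `v ++ [q]` is a prefix of the address of the leaf of `P_x`.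
def pathEdgeSum {M : Type*} [AddCommMonoid M] (t : BDT n) (x : Fin n → Bool)
    (F : List Bool → Bool → M) : M :=
  ∑ v ∈ t.internals, ∑ q : Bool, if v ++ [q] <+: t.leafAddr x then F v q else 0

section PathEdgeSum

variable {M : Type*} [AddCommMonoid M]

@[simp]
lemma pathEdgeSum_leaf (x : Fin n → Bool) (F : List Bool → Bool → M) :
    (leaf : BDT n).pathEdgeSum x F = 0 := by
  simp [pathEdgeSum, internals]

lemma sum_internals_node (J : Fin n) (c : Bool → Bool) (ch : Bool → BDT n)
    (G : List Bool → M) :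
    ∑ v ∈ (node J c ch).internals, G v
      = G [] + ((∑ v ∈ (ch false).internals, G (false :: v))
        + ∑ v ∈ (ch true).internals, G (true :: v)) := by
  rw [internals, Finset.sum_insert, Finset.sum_union, Finset.sum_image, Finset.sum_image]
  · simp
  · simp
  · simp [Finset.disjoint_left]
  · simp

lemma pathEdgeSum_node (J : Fin n) (c : Bool → Bool) (ch : Bool → BDT n)
    (x : Fin n → Bool) (F : List Bool → Bool → M) :
    (node J c ch).pathEdgeSum x F
      = F [] (x J) + (ch (x J)).pathEdgeSum x fun v q => F (x J :: v) q := by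
  have hroot : (∑ q : Bool, if [] ++ [q] <+: (node J c ch).leafAddr x then F [] q else 0)
      = F [] (x J) := by
    cases hx : x J <;> simp [leafAddr, List.cons_prefix_cons, hx]
  have hchild : ∀ b : Bool,
      (∑ v ∈ (ch b).internals, ∑ q : Bool,
        if (b :: v) ++ [q] <+: (node J c ch).leafAddr x then F (b :: v) q else 0)
        = if b = x J then (ch (x J)).pathEdgeSum x (fun v q => F (x J :: v) q) else 0 := by
    intro b
    by_cases hb : b = x J
    · subst hb
      simp [pathEdgeSum, leafAddr, List.cons_prefix_cons]
    · simp [leafAddr, List.cons_prefix_cons, hb]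
  rw [pathEdgeSum, sum_internals_node, hroot, hchild false, hchild true]
  cases x J <;> simp

end PathEdgeSum

lemma pathEdgeSum_sub {M : Type*} [AddCommGroup M] (t : BDT n) (x : Fin n → Bool)
    (g : List Bool → M) :
    t.pathEdgeSum x (fun v q => g v - g (v ++ [q])) = g [] - g (t.leafAddr x) := by
  induction t generalizing g with
  | leaf => simp [leafAddr]
  | node J c ch ih =>
    simp only [pathEdgeSum_node, List.cons_append, ih, leafAddr, List.nil_append]
    abel

lemma pathEdgeSum_colorAt {M : Type*} [AddCommMonoid M] (t : BDT n) (x : Fin n → Bool)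
    (f : Bool → M) :
    t.pathEdgeSum x (fun v q => f (t.colorAt v q)) = ((t.pathColors x).map f).sum := by
  induction t with
  | leaf => simp [pathColors]
  | node J c ch ih =>
    rw [pathEdgeSum_node, pathColors, List.map_cons, List.sum_cons, ← ih (x J)]
    rfl

lemma exists_queryAt_of_prefix_leafAddr (t : BDT n) (x : Fin n → Bool) {v : List Bool}
    {q : Bool} (h : v ++ [q] <+: t.leafAddr x) : ∃ J, t.queryAt v = some J ∧ q = x J := by
  induction t generalizing v with
  | leaf => simp [leafAddr] at h
  | node J c ch ih =>
    cases v with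
    | nil => exact ⟨J, rfl, by simpa [leafAddr, List.cons_prefix_cons] using h⟩
    | cons p v =>
      simp only [leafAddr, List.cons_append, List.cons_prefix_cons] at h
      obtain ⟨rfl, h⟩ := h
      exact ih (x J) h

lemma length_pathColors (t : BDT n) (x : Fin n → Bool) :
    (t.pathColors x).length = (t.leafAddr x).length := by
  induction t with
  | leaf => rfl
  | node J c ch ih => simp [pathColors, leafAddr, ih]

lemma sum_fintype_internals_prod {M : Type*} [AddCommMonoid M] (t : BDT n)
    (G : List Bool → Bool → M) :
    ∑ e : {v // v ∈ t.internals} × Bool, G e.1.1 e.2 = ∑ v ∈ t.internals, ∑ q, G v q := by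
  rw [Fintype.sum_prod_type, Finset.sum_coe_sort t.internals (fun v => ∑ q, G v q)]

section Witness

variable (t : BDT n) {W : Bool → ℝ} (x : Fin n → Bool)

lemma inputVec_apply_mul_inv_sqrt {v : List Bool} {q : Bool} (hW : 0 < W (t.colorAt v q))
    (u : {u // u ∈ t.verts}) :
    t.inputVec W v q u * ((1 / √(W (t.colorAt v q)) : ℝ) : ℂ)
      = t.evec v u - t.evec (v ++ [q]) u := by
  have hsqrt : ((√(W (t.colorAt v q)) : ℝ) : ℂ) ≠ 0 := by
    exact_mod_cast (Real.sqrt_pos.2 hW).ne'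
  simp only [inputVec, PiLp.smul_apply, PiLp.sub_apply, smul_eq_mul]
  push_cast
  field_simp

variable (W) in
noncomputable def witness : EuclideanSpace ℂ ({v // v ∈ t.internals} × Bool) :=
  WithLp.toLp 2 fun e => if e.1.1 ++ [e.2] <+: t.leafAddr x
    then ((1 / √(W (t.colorAt e.1.1 e.2)) : ℝ) : ℂ) else 0

lemma witness_apply (e : {v // v ∈ t.internals} × Bool) :
    t.witness W x e = if e.1.1 ++ [e.2] <+: t.leafAddr x
      then ((1 / √(W (t.colorAt e.1.1 e.2)) : ℝ) : ℂ) else 0 := rfl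

lemma exists_queryAt_of_witness_ne_zero {e : {v // v ∈ t.internals} × Bool}
    (he : t.witness W x e ≠ 0) :
    ∃ J, t.queryAt e.1.1 = some J ∧ e.2 = x J := by
  rw [witness_apply] at he
  exact t.exists_queryAt_of_prefix_leafAddr x (of_not_not fun h => he (if_neg h))

lemma spanMatrix_mulVec_witness (hW : ∀ c, 0 < W c) (u : {u // u ∈ t.verts}) :
    (t.spanMatrix W).mulVec (fun e => t.witness W x e) u
      = (t.evec [] - t.evec (t.leafAddr x)) u :=
  calc (t.spanMatrix W).mulVec (fun e => t.witness W x e) u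
      = ∑ e : {v // v ∈ t.internals} × Bool, t.inputVec W e.1.1 e.2 u * t.witness W x e := rfl
    _ = t.pathEdgeSum x fun v q => t.evec v u - t.evec (v ++ [q]) u := by
      rw [pathEdgeSum, ← sum_fintype_internals_prod]
      refine Finset.sum_congr rfl fun e _ => ?_
      rw [witness_apply, mul_ite, mul_zero, t.inputVec_apply_mul_inv_sqrt (hW _)]
    _ = _ := t.pathEdgeSum_sub x fun v => t.evec v u

lemma norm_witness_sq (hW : ∀ c, 0 < W c) :
    ‖t.witness W x‖ ^ 2 = ((t.pathColors x).map fun c => 1 / W c).sum :=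
  calc ‖t.witness W x‖ ^ 2 = ∑ e : {v // v ∈ t.internals} × Bool, ‖t.witness W x e‖ ^ 2 :=
      EuclideanSpace.norm_sq_eq _
    _ = t.pathEdgeSum x fun v q => 1 / W (t.colorAt v q) := by
      rw [pathEdgeSum, ← sum_fintype_internals_prod]
      refine Finset.sum_congr rfl fun e _ => ?_
      rw [witness_apply]
      split_ifs
      · rw [Complex.norm_real, Real.norm_eq_abs, sq_abs, div_pow, one_pow,
          Real.sq_sqrt (hW _).le]
      · simp
    _ = _ := t.pathEdgeSum_colorAt x fun c => 1 / W c

end Witness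

end BDT

theorem stmt7_general {n : ℕ} (t : BDT n)
    (W : Bool → ℝ) (hWblack : 0 < W true) (hWred : 0 < W false)
    (x : Fin n → Bool)
    (wx : EuclideanSpace ℂ ({v // v ∈ t.internals} × Bool))
    (hwx : ∀ e : {v // v ∈ t.internals} × Bool,
      wx e = if (e.1.1 ++ [e.2]) <+: t.leafAddr x
        then ((1 / Real.sqrt (W (t.colorAt e.1.1 e.2)) : ℝ) : ℂ) else 0) :
    (∀ e : {v // v ∈ t.internals} × Bool, wx e ≠ 0 →
        ∃ J, t.queryAt e.1.1 = some J ∧ e.2 = x J) ∧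
    (∀ u : {u // u ∈ t.verts},
        (t.spanMatrix W).mulVec (fun e => wx e) u
          = (t.evec [] - t.evec (t.leafAddr x)) u) ∧
    ‖wx‖ ^ 2 = ((t.pathColors x).map fun c => 1 / W c).sum ∧
    ((t.pathColors x).map fun c => 1 / W c).sum
      ≤ ((t.pathColors x).count false : ℝ) / W false
        + ((t.leafAddr x).length : ℝ) / W true := by
  have hW : ∀ c, 0 < W c := Bool.forall_bool.2 ⟨hWred, hWblack⟩
  obtain rfl : wx = t.witness W x := PiLp.ext hwx
  refine ⟨fun e => t.exists_queryAt_of_witness_ne_zero x,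
    t.spanMatrix_mulVec_witness x hW, t.norm_witness_sq x hW, ?_⟩
  rw [← t.length_pathColors x]
  exact sum_map_inv_le W hW _

/-- **Positive witness of the span program of Theorem 3.1.**  Let `w_x ∈ ℂ^{E(𝒯)}` have
entry `1/√(W_{C(v, x_{J(v)})})` at each edge of the computation path `P_x` (an edge
`(v, q)` lies on `P_x` iff `v ++ [q]` is a prefix of the address of the leaf of `P_x`)
and entry `0` elsewhere.  Then `w_x` is supported on edges available for `x`, it
satisfies `A·w_x = e_root − e_{leaf(x)}`, and
`‖w_x‖² = Σ_{v ∈ P_x internal} 1/W_{C(v, x_{J(v)})} ≤ G_x/W_red + T_x/W_black`. -/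
theorem stmt7 {n : ℕ} (t : BDT n) (hcol : t.ColorWF) (hro : t.ReadOnce)
    (W : Bool → ℝ) (hWblack : 0 < W true) (hWred : 0 < W false)
    (x : Fin n → Bool)
    (wx : EuclideanSpace ℂ ({v // v ∈ t.internals} × Bool))
    (hwx : ∀ e : {v // v ∈ t.internals} × Bool,
      wx e = if (e.1.1 ++ [e.2]) <+: t.leafAddr x
        then ((1 / Real.sqrt (W (t.colorAt e.1.1 e.2)) : ℝ) : ℂ) else 0) :
    (∀ e : {v // v ∈ t.internals} × Bool, wx e ≠ 0 →
        ∃ J, t.queryAt e.1.1 = some J ∧ e.2 = x J) ∧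
    (∀ u : {u // u ∈ t.verts},
        (t.spanMatrix W).mulVec (fun e => wx e) u
          = (t.evec [] - t.evec (t.leafAddr x)) u) ∧
    ‖wx‖ ^ 2 = ((t.pathColors x).map fun c => 1 / W c).sum ∧
    ((t.pathColors x).map fun c => 1 / W c).sum
      ≤ ((t.pathColors x).count false : ℝ) / W false
        + ((t.leafAddr x).length : ℝ) / W true :=
  stmt7_general t W hWblack hWred x wx hwx
end

section
/- (Expected number of k-records of a random permutation, used in Proposition on finding the k smallest elements.) For all integers n ≥ 1 and k ≥ 1, Σ_{σ ∈ S_n} |{ j ∈ {1, …, n} : |{ i < j : σ(i) < σ(j) }| < k }| = n! · Σ_{j=1}^n min(k, j)/j. Consequently, the expected number of such indices for a uniformly random permutation of {1, …, n} is at most k·(1 + ln n). -/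
/-!
The rank of `σ j` among the prefix values `σ(Iic j)` is uniformly distributed over
`{0, …, j}`. Precomposing `σ` with a transposition of two prefix positions keeps the set of
prefix values, so every prefix position is equally likely to carry the value of a given rank,
while for each `σ` exactly one position does. Hence `j` is a `k`-record of exactly a fraction
`min(k, j + 1)/(j + 1)` of all permutations; summing over `j` gives the identity, and
`min(k, j) ≤ k` bounds the average by `k · H_n ≤ k (1 + log n)`.
-/

open Finset Equiv

section Rank

variable {α : Type*} [LinearOrder α]

def rankIn (T : Finset α) (x : α) : ℕ := #{y ∈ T | y < x}

lemma rankIn_strictMonoOn (T : Finset α) : StrictMonoOn (rankIn T) T := by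
  intro x hx y _ hxy
  refine card_lt_card ⟨fun z hz => ?_, fun hsub => ?_⟩
  · simp only [mem_filter] at hz ⊢
    exact ⟨hz.1, hz.2.trans hxy⟩
  · simpa using hsub (mem_filter.2 ⟨hx, hxy⟩)

lemma rankIn_lt_card {T : Finset α} {x : α} (hx : x ∈ T) : rankIn T x < #T :=
  card_lt_card (filter_ssubset.2 ⟨x, hx, lt_irrefl x⟩)

lemma image_rankIn (T : Finset α) : T.image (rankIn T) = range #T :=
  eq_of_subset_of_card_le (image_subset_iff.2 fun _ hx => mem_range.2 (rankIn_lt_card hx))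
    (by rw [card_range, card_image_of_injOn (rankIn_strictMonoOn T).injOn])

lemma card_filter_rankIn (T : Finset α) (p : ℕ → Prop) [DecidablePred p] :
    #{x ∈ T | p (rankIn T x)} = #{c ∈ range #T | p c} := by
  rw [← image_rankIn, filter_image,
    card_image_of_injOn ((rankIn_strictMonoOn T).injOn.mono (filter_subset _ _))]

end Rank

lemma Finset.image_swap_of_mem {α : Type*} [DecidableEq α] {s : Finset α} {i j : α}
    (hi : i ∈ s) (hj : j ∈ s) : s.image (swap i j) = s := by
  rw [← coe_toEmbedding, ← map_eq_image]
  refine map_perm fun a ha => ?_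
  rcases eq_or_ne a i with rfl | hai
  · exact hi
  rcases eq_or_ne a j with rfl | haj
  · exact hj
  exact absurd (swap_apply_of_ne_of_ne hai haj) ha

section Perm

variable {α : Type*} [Fintype α] [DecidableEq α] [LinearOrder α]

lemma card_perm_filter_rankIn_mul_card (p : ℕ → Prop) [DecidablePred p] {s : Finset α} {j : α}
    (hj : j ∈ s) :
    #{σ : Perm α | p (rankIn (s.image σ) (σ j))} * #s
      = #{c ∈ range #s | p c} * (Fintype.card α).factorial := by
  have hconst : ∀ i ∈ s, #{σ : Perm α | p (rankIn (s.image σ) (σ i))}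
      = #{σ : Perm α | p (rankIn (s.image σ) (σ j))} := by
    intro i hi
    refine card_equiv (Equiv.mulRight (swap i j)) fun σ => ?_
    simp only [mem_filter, mem_univ, true_and, coe_mulRight, Perm.coe_mul, Function.comp_apply,
      swap_apply_right, ← image_image, image_swap_of_mem hi hj]
  have hfiber : ∀ σ : Perm α,
      #{i ∈ s | p (rankIn (s.image σ) (σ i))} = #{c ∈ range #s | p c} := by
    intro σ
    rw [← card_image_of_injective s σ.injective, ← card_filter_rankIn, filter_image,
      card_image_of_injective _ σ.injective]
  calc #{σ : Perm α | p (rankIn (s.image σ) (σ j))} * #s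
      = ∑ i ∈ s, #{σ : Perm α | p (rankIn (s.image σ) (σ i))} := by
        rw [sum_congr rfl hconst, sum_const, smul_eq_mul, mul_comm]
    _ = ∑ σ : Perm α, #{i ∈ s | p (rankIn (s.image σ) (σ i))} := by
        simp only [card_filter]; exact sum_comm
    _ = #{c ∈ range #s | p c} * (Fintype.card α).factorial := by
        rw [sum_congr rfl fun σ _ => hfiber σ, sum_const, card_univ, Fintype.card_perm,
          smul_eq_mul, mul_comm]

end Perm

section Records

variable {α : Type*} [Fintype α] [DecidableEq α] [LinearOrder α] [LocallyFiniteOrderBot α]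

def prefixRank (σ : Perm α) (j : α) : ℕ := #{i | i < j ∧ σ i < σ j}

lemma prefixRank_eq_rankIn (σ : Perm α) (j : α) :
    prefixRank σ j = rankIn ((Iic j).image σ) (σ j) := by
  have hprefix : ({i | i < j ∧ σ i < σ j} : Finset α) = {i ∈ Iic j | σ i < σ j} := by
    ext i
    simp only [mem_filter, mem_univ, true_and, mem_Iic]
    exact ⟨fun h => ⟨h.1.le, h.2⟩,
      fun h => ⟨h.1.lt_of_ne (by rintro rfl; exact lt_irrefl _ h.2), h.2⟩⟩
  rw [prefixRank, hprefix, rankIn, filter_image, card_image_of_injective _ σ.injective]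

lemma card_filter_prefixRank_lt_mul_card_Iic (k : ℕ) (j : α) :
    #{σ : Perm α | prefixRank σ j < k} * #(Iic j)
      = min k #(Iic j) * (Fintype.card α).factorial := by
  simp only [prefixRank_eq_rankIn]
  rw [card_perm_filter_rankIn_mul_card (· < k) (mem_Iic.2 le_rfl)]
  have hlt : {c ∈ range #(Iic j) | c < k} = range #(Iic j) ∩ range k := by ext; simp
  rw [hlt, range_inter_range, card_range, min_comm]

end Records

lemma Fin.sum_univ_add_one_eq_sum_Icc {M : Type*} [AddCommMonoid M] (n : ℕ) (f : ℕ → M) :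
    ∑ j : Fin n, f (j + 1) = ∑ j ∈ Icc 1 n, f j := by
  rw [Fin.sum_univ_eq_sum_range (fun j => f (j + 1)), range_eq_Ico, sum_Ico_add', zero_add,
    Ico_add_one_right_eq_Icc]

lemma sum_min_div_le_mul_one_add_log (n k : ℕ) :
    ∑ j ∈ Icc 1 n, (min k j : ℝ) / j ≤ k * (1 + Real.log n) :=
  calc ∑ j ∈ Icc 1 n, (min k j : ℝ) / j
      ≤ ∑ j ∈ Icc 1 n, k * (j : ℝ)⁻¹ :=
        sum_le_sum fun j _ => by
          rw [div_eq_mul_inv]; gcongr; exact min_le_left _ _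
    _ = k * harmonic n := by simp [harmonic_eq_sum_Icc, mul_sum]
    _ ≤ k * (1 + Real.log n) := by gcongr; exact harmonic_le_one_add_log n

theorem stmt10_general (n k : ℕ) :
    (∑ σ : Equiv.Perm (Fin n),
        ((Finset.univ.filter fun j : Fin n =>
            (Finset.univ.filter fun i : Fin n => i < j ∧ σ i < σ j).card < k).card : ℝ))
      = (Nat.factorial n : ℝ) * ∑ j ∈ Finset.Icc 1 n, (min k j : ℝ) / j ∧
    (∑ σ : Equiv.Perm (Fin n),
        ((Finset.univ.filter fun j : Fin n =>
            (Finset.univ.filter fun i : Fin n => i < j ∧ σ i < σ j).card < k).card : ℝ))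
        / (Nat.factorial n : ℝ)
      ≤ k * (1 + Real.log n) := by
  have hrecords (j : Fin n) :
      (#{σ : Perm (Fin n) | prefixRank σ j < k} : ℝ)
        = n.factorial * ((min k (j + 1 : ℕ) : ℝ) / (j + 1 : ℕ)) := by
    have h := card_filter_prefixRank_lt_mul_card_Iic k j
    rw [Fin.card_Iic, Fintype.card_fin] at h
    rw [mul_div_assoc', eq_div_iff (by positivity)]
    exact_mod_cast h.trans (mul_comm _ _)
  have htotal : (∑ σ : Perm (Fin n), (#{j | prefixRank σ j < k} : ℝ))
      = n.factorial * ∑ j ∈ Icc 1 n, (min k j : ℝ) / j := by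
    simp only [card_filter, Nat.cast_sum]
    rw [sum_comm]
    simp only [← Nat.cast_sum, ← card_filter, hrecords, ← mul_sum]
    rw [Fin.sum_univ_add_one_eq_sum_Icc n fun j => (min k j : ℝ) / j]
  refine ⟨htotal, ?_⟩
  change (∑ σ : Perm (Fin n), (#{j | prefixRank σ j < k} : ℝ)) / n.factorial ≤ _
  rw [htotal, mul_div_cancel_left₀ _ (by positivity)]
  exact sum_min_div_le_mul_one_add_log n k

/-- **Expected number of k-records of a random permutation.**  An index `j` is a
`k`-record of `σ` if `σ j` is among the `k` smallest of `σ 1, …, σ j`, i.e. if fewer than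
`k` indices `i < j` have `σ i < σ j`.  The total number of `k`-records over all
permutations of an `n`-element set is `n! · Σ_{j=1}^n min(k, j)/j`; consequently the
expected number of `k`-records of a uniformly random permutation is at most
`k·(1 + ln n)`. -/
theorem stmt10 (n k : ℕ) (hn : 1 ≤ n) (hk : 1 ≤ k) :
    (∑ σ : Equiv.Perm (Fin n),
        ((Finset.univ.filter fun j : Fin n =>
            (Finset.univ.filter fun i : Fin n => i < j ∧ σ i < σ j).card < k).card : ℝ))
      = (Nat.factorial n : ℝ) * ∑ j ∈ Finset.Icc 1 n, (min k j : ℝ) / j ∧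
    (∑ σ : Equiv.Perm (Fin n),
        ((Finset.univ.filter fun j : Fin n =>
            (Finset.univ.filter fun i : Fin n => i < j ∧ σ i < σ j).card < k).card : ℝ))
        / (Nat.factorial n : ℝ)
      ≤ k * (1 + Real.log n) :=
  stmt10_general n k
end
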